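/- arXiv:2411.16492 — 5 statements merged into one kernel-verified Lean document; each statement's English description precedes it below -/
import Mathlib

section
/- For all integers m ≥ 0 and k ≥ 0, B_S(m,k) = ∑_{j=0}^{m} ∑_{i=0}^{⌊(m+1)/2⌋} C(⌊(m+1)/2⌋, i) · S(i+⌊m/2⌋, m−j) · ∑_{l=0}^{⌊m/2⌋} C(⌊m/2⌋, l) · S(l+⌊(m+1)/2⌋, m−k+j). -/
open Finset

/-- Stirling number of the second kind `S(n,l)`. -/
def stirling2 : ℕ → ℕ → ℕ
  | 0, 0 => 1
  | 0, _ + 1 => 0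
  | _ + 1, 0 => 0
  | n + 1, l + 1 => (l + 1) * stirling2 n (l + 1) + stirling2 n l

/-- Stirling number of the second kind with integer lower argument, extended by
`S(n,l) = 0` whenever `l < 0`. -/
def stirlingZ (n : ℕ) (l : ℤ) : ℕ := if 0 ≤ l then stirling2 n l.toNat else 0

/-- `bishopCount m k` is the number of `k`-element subsets `P` of `{1,…,m} × {1,…,m}`
such that any two distinct elements `(i,j)` and `(i',j')` of `P` satisfy
`i+j ≠ i'+j'` and `i−j ≠ i'−j'` (nonattacking bishops on the `m × m` board). -/
def bishopCount (m k : ℕ) : ℕ :=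
  (((Finset.Icc 1 m ×ˢ Finset.Icc 1 m).powersetCard k).filter
    (fun P => ∀ a ∈ P, ∀ b ∈ P, a ≠ b →
      a.1 + a.2 ≠ b.1 + b.2 ∧ (a.1 : ℤ) - a.2 ≠ (b.1 : ℤ) - b.2)).card

/-!
Rotating the board by `(i, j) ↦ (i + j, i - j)` turns bishops into rooks: a placement is
nonattacking iff both `i + j` and `i - j` are injective on it. Cells with `i + j` even and
cells with `i + j` odd share no line of either kind, so the rook numbers of the board are the
convolution of those of the two colour classes. Relabelling the lines of a colour class in order
of length turns it into a Ferrers board with row lengths `1, 1, 3, 3, 5, …` (even cells) or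
`0, 2, 2, 4, 4, …` (odd cells). In a Ferrers board whose row `n` has length `n` or `n + 1`,
adding a row of length `ℓ` changes the rook numbers by `r_{k+1} ↦ r_{k+1} + (ℓ - k) r_k`; by
Pascal's rule and the recurrence of `S`, this is also the recurrence of
`∑ i, C(a, i) S(i + b, n - k)`, where `a` counts the rows of length `n + 1` and `b` the others.
-/

theorem stirling2_eq_stirlingSecond : ∀ n l, stirling2 n l = Nat.stirlingSecond n l
  | 0, 0 | 0, _ + 1 | _ + 1, 0 => rfl
  | n + 1, l + 1 => by
    rw [stirling2, Nat.stirlingSecond_succ_succ, stirling2_eq_stirlingSecond n,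
      stirling2_eq_stirlingSecond n]

theorem stirlingZ_of_neg {n : ℕ} {l : ℤ} (h : l < 0) : stirlingZ n l = 0 :=
  if_neg (not_le.2 h)

theorem stirlingZ_of_lt {n : ℕ} {l : ℤ} (h : (n : ℤ) < l) : stirlingZ n l = 0 := by
  rw [stirlingZ, if_pos (by omega), stirling2_eq_stirlingSecond,
    Nat.stirlingSecond_eq_zero_of_lt (by omega)]

theorem stirlingZ_self (n : ℕ) : stirlingZ n n = 1 := by
  rw [stirlingZ, if_pos (by omega), Int.toNat_natCast, stirling2_eq_stirlingSecond,
    Nat.stirlingSecond_self]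

theorem stirlingZ_succ (n : ℕ) (l : ℤ) :
    stirlingZ (n + 1) l = l.toNat * stirlingZ n l + stirlingZ n (l - 1) := by
  rcases lt_trichotomy l 0 with hl | rfl | hl
  · simp [stirlingZ_of_neg, hl, show l - 1 < 0 by omega]
  · simp [stirlingZ, stirling2]
  · obtain ⟨l, rfl⟩ : ∃ l' : ℕ, l = l' + 1 := ⟨(l - 1).toNat, by omega⟩
    simp only [stirlingZ, stirling2_eq_stirlingSecond, if_pos (by omega : (0 : ℤ) ≤ l + 1),
      if_pos (Int.natCast_nonneg l), add_sub_cancel_right, Int.toNat_natCast,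
      show ((l : ℤ) + 1).toNat = l + 1 by omega, Nat.stirlingSecond_succ_succ]

def stirlingSum (a b : ℕ) (r : ℤ) : ℕ :=
  ∑ i ∈ range (a + 1), a.choose i * stirlingZ (i + b) r

section stirlingSum

variable {a b : ℕ} {r : ℤ}

theorem stirlingSum_of_neg (h : r < 0) : stirlingSum a b r = 0 :=
  sum_eq_zero fun i _ => by rw [stirlingZ_of_neg h, mul_zero]

theorem stirlingSum_of_lt (h : (a + b : ℤ) < r) : stirlingSum a b r = 0 :=
  sum_eq_zero fun i hi => by
    rw [stirlingZ_of_lt (by have := mem_range.1 hi; omega), mul_zero]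

theorem stirlingSum_self (a b : ℕ) : stirlingSum a b (a + b) = 1 := by
  rw [stirlingSum, sum_range_succ, sum_eq_zero fun i hi => by
    rw [stirlingZ_of_lt (by have := mem_range.1 hi; omega), mul_zero]]
  simpa using stirlingZ_self (a + b)

theorem stirlingSum_succ_right (a b : ℕ) (r : ℤ) :
    stirlingSum a (b + 1) r = r.toNat * stirlingSum a b r + stirlingSum a b (r - 1) := by
  simp only [stirlingSum, mul_sum, ← sum_add_distrib, ← add_assoc, stirlingZ_succ]
  exact sum_congr rfl fun _ _ => by ring

theorem stirlingSum_succ_left (a b : ℕ) (r : ℤ) :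
    stirlingSum (a + 1) b r = (r + 1).toNat * stirlingSum a b r + stirlingSum a b (r - 1) := by
  have pascal : stirlingSum (a + 1) b r = stirlingSum a b r + stirlingSum a (b + 1) r := by
    have h := sum_choose_succ_mul (fun i _ => stirlingZ (i + b) r) a
    simp only [Nat.cast_id, add_right_comm _ 1 b] at h
    exact h
  rw [pascal, stirlingSum_succ_right]
  rcases lt_or_ge r 0 with hr | hr
  · simp [stirlingSum_of_neg hr, stirlingSum_of_neg (show r - 1 < 0 by omega)]
  · rw [show (r + 1).toNat = r.toNat + 1 by omega]
    ring

end stirlingSum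

section rookNumber

variable {α ι κ : Type*} (r : α → ι) (c : α → κ)

open Classical in
noncomputable def rookPlacements (B : Finset α) (k : ℕ) : Finset (Finset α) :=
  (B.powersetCard k).filter fun P : Finset α => Set.InjOn r (P : Set α) ∧ Set.InjOn c (P : Set α)

noncomputable def rookNumber (B : Finset α) (k : ℕ) : ℕ :=
  #(rookPlacements r c B k)

variable {r c} in
@[simp]
theorem mem_rookPlacements {B P : Finset α} {k : ℕ} :
    P ∈ rookPlacements r c B k ↔ P ⊆ B ∧ #P = k ∧ Set.InjOn r P ∧ Set.InjOn c P := by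
  simp [rookPlacements, and_assoc]

theorem rookNumber_zero (B : Finset α) : rookNumber r c B 0 = 1 := by
  rw [rookNumber, card_eq_one]
  refine ⟨∅, ext fun P => ?_⟩
  simp only [mem_rookPlacements, card_eq_zero, mem_singleton]
  exact ⟨fun h => h.2.1, by rintro rfl; simp⟩

theorem rookNumber_empty_succ (k : ℕ) : rookNumber r c ∅ (k + 1) = 0 := by
  rw [rookNumber, card_eq_zero, eq_empty_iff_forall_notMem]
  intro P hP
  obtain ⟨hP, hk, -⟩ := mem_rookPlacements.1 hP
  simp [subset_empty.1 hP] at hk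

theorem rookNumber_image {β : Type*} [DecidableEq α] {f : β → α} {B : Finset β}
    (hf : Set.InjOn f B) (k : ℕ) :
    rookNumber r c (B.image f) k = rookNumber (r ∘ f) (c ∘ f) B k := by
  symm
  refine card_bij (fun P _ => P.image f) ?_ ?_ ?_
  · intro P hP
    obtain ⟨hPB, rfl, hr, hc⟩ := mem_rookPlacements.1 hP
    have hfP := hf.mono (coe_subset.2 hPB)
    rw [mem_rookPlacements, coe_image, ← hfP.comp_iff, ← hfP.comp_iff]
    exact ⟨image_subset_image hPB, card_image_of_injOn hfP, hr, hc⟩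
  · intro P hP Q hQ hPQ
    rw [← coe_inj, ← hf.image_eq_image_iff (coe_subset.2 (mem_rookPlacements.1 hP).1)
      (coe_subset.2 (mem_rookPlacements.1 hQ).1), ← coe_image, ← coe_image, hPQ]
  · intro Q hQ
    obtain ⟨hQB, rfl, hr, hc⟩ := mem_rookPlacements.1 hQ
    obtain ⟨P, hPB, rfl⟩ := subset_image_iff.1 hQB
    have hfP := hf.mono (coe_subset.2 hPB)
    rw [coe_image, ← hfP.comp_iff] at hr hc
    exact ⟨P, mem_rookPlacements.2 ⟨hPB, (card_image_of_injOn hfP).symm, hr, hc⟩, rfl⟩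

theorem rookNumber_comp {ι' κ' : Type*} {f : ι → ι'} {g : κ → κ'} {B : Finset α}
    (hf : Set.InjOn f (r '' B)) (hg : Set.InjOn g (c '' B)) (k : ℕ) :
    rookNumber (f ∘ r) (g ∘ c) B k = rookNumber r c B k := by
  refine congrArg card (ext fun P => ?_)
  simp only [mem_rookPlacements]
  refine and_congr_right fun hPB => and_congr_right fun _ => and_congr
    ⟨.of_comp, fun hr => (hf.mono (Set.image_mono hPB)).comp hr (Set.mapsTo_image r P)⟩
    ⟨.of_comp, fun hc => (hg.mono (Set.image_mono hPB)).comp hc (Set.mapsTo_image c P)⟩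

theorem rookNumber_union [DecidableEq α] {B₀ B₁ : Finset α}
    (hr : ∀ a ∈ B₀, ∀ b ∈ B₁, r a ≠ r b) (hc : ∀ a ∈ B₀, ∀ b ∈ B₁, c a ≠ c b) (k : ℕ) :
    rookNumber r c (B₀ ∪ B₁) k =
      ∑ p ∈ antidiagonal k, rookNumber r c B₀ p.1 * rookNumber r c B₁ p.2 := by
  have hdisj : Disjoint B₀ B₁ := disjoint_left.2 fun a h₀ h₁ => hr a h₀ a h₁ rfl
  have inter_left {Q₀ Q₁ : Finset α} (h₀ : Q₀ ⊆ B₀) (h₁ : Q₁ ⊆ B₁) : (Q₀ ∪ Q₁) ∩ B₀ = Q₀ := by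
    rw [union_inter_distrib_right, inter_eq_left.2 h₀,
      disjoint_iff_inter_eq_empty.1 (hdisj.symm.mono_left h₁), union_empty]
  have inter_right {Q₀ Q₁ : Finset α} (h₀ : Q₀ ⊆ B₀) (h₁ : Q₁ ⊆ B₁) : (Q₀ ∪ Q₁) ∩ B₁ = Q₁ := by
    rw [union_inter_distrib_right, inter_eq_left.2 h₁,
      disjoint_iff_inter_eq_empty.1 (hdisj.mono_left h₀), empty_union]
  rw [rookNumber, card_eq_sum_card_fiberwise (f := fun P => (#(P ∩ B₀), #(P ∩ B₁)))
    (t := antidiagonal k)]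
  · refine sum_congr rfl fun p hp => ?_
    rw [rookNumber, rookNumber, ← card_product]
    refine card_nbij' (fun P => (P ∩ B₀, P ∩ B₁)) (fun Q => Q.1 ∪ Q.2) ?_ ?_ ?_ ?_
    · intro P hP
      simp only [mem_coe, mem_filter, mem_rookPlacements, mem_product, Prod.ext_iff] at hP ⊢
      obtain ⟨⟨-, -, hrP, hcP⟩, h₀, h₁⟩ := hP
      have h₀P : (↑(P ∩ B₀) : Set α) ⊆ P := coe_subset.2 inter_subset_left
      have h₁P : (↑(P ∩ B₁) : Set α) ⊆ P := coe_subset.2 inter_subset_left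
      exact ⟨⟨inter_subset_right, h₀, hrP.mono h₀P, hcP.mono h₀P⟩,
        ⟨inter_subset_right, h₁, hrP.mono h₁P, hcP.mono h₁P⟩⟩
    · rintro ⟨Q₀, Q₁⟩ hQ
      simp only [mem_coe, mem_filter, mem_rookPlacements, mem_product] at hQ ⊢
      obtain ⟨⟨h₀, hk₀, hr₀, hc₀⟩, h₁, hk₁, hr₁, hc₁⟩ := hQ
      have hQ : Disjoint (Q₀ : Set α) Q₁ := disjoint_coe.2 (hdisj.mono h₀ h₁)
      rw [inter_left h₀ h₁, inter_right h₀ h₁, coe_union, Set.injOn_union hQ,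
        Set.injOn_union hQ, card_union_of_disjoint (disjoint_coe.1 hQ), hk₀, hk₁,
        ← HasAntidiagonal.mem_antidiagonal.1 hp]
      exact ⟨⟨union_subset_union h₀ h₁, rfl, ⟨hr₀, hr₁, fun a ha b hb => hr a (h₀ ha) b (h₁ hb)⟩,
        ⟨hc₀, hc₁, fun a ha b hb => hc a (h₀ ha) b (h₁ hb)⟩⟩, rfl⟩
    · intro P hP
      simp only [mem_coe, mem_filter, mem_rookPlacements] at hP
      exact (inter_union_distrib_left _ _ _).symm.trans (inter_eq_left.2 hP.1.1)
    · rintro ⟨Q₀, Q₁⟩ hQ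
      simp only [mem_coe, mem_product, mem_rookPlacements] at hQ
      exact Prod.ext (inter_left hQ.1.1 hQ.2.1) (inter_right hQ.1.1 hQ.2.1)
  · intro P hP
    obtain ⟨hPB, rfl, -⟩ := mem_rookPlacements.1 (mem_coe.1 hP)
    rw [mem_coe, HasAntidiagonal.mem_antidiagonal, ← card_union_of_disjoint
      (hdisj.mono inter_subset_right inter_subset_right), ← inter_union_distrib_left,
      inter_eq_left.2 hPB]

section row

variable {β : Type*} [DecidableEq α] [DecidableEq β] {B : Finset (α × β)} {x : α} {C : Finset β}

theorem card_rookPlacements_union_row_not_subset (hx : ∀ a ∈ B, a.1 ≠ x) (k : ℕ) :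
    #{P ∈ rookPlacements Prod.fst Prod.snd (B ∪ {x} ×ˢ C) (k + 1) | ¬P ⊆ B} =
      #((rookPlacements Prod.fst Prod.snd B k).sigma fun Q => C \ Q.image Prod.snd) := by
  have hxB {y : β} : (x, y) ∉ B := fun h => hx _ h rfl
  symm
  refine card_bij (fun p _ => insert (x, p.2) p.1) ?_ ?_ ?_
  · rintro ⟨Q, y⟩ hQy
    obtain ⟨⟨hQB, hk, hr, hc⟩, hyC, hyQ⟩ := by
      simpa only [mem_sigma, mem_sdiff, mem_rookPlacements] using hQy
    have hxQ : (x, y) ∉ Q := mt (@hQB _) hxB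
    rw [mem_filter, mem_rookPlacements, coe_insert, Set.injOn_insert hxQ, Set.injOn_insert hxQ,
      card_insert_of_notMem hxQ, hk]
    refine ⟨⟨insert_subset (mem_union_right _ (mem_product.2 ⟨mem_singleton_self x, hyC⟩))
      (hQB.trans subset_union_left), rfl, ⟨hr, ?_⟩, ⟨hc, ?_⟩⟩,
      fun h => hxB (h (mem_insert_self _ _))⟩
    · rintro ⟨a, ha, hax⟩
      exact hx a (hQB ha) hax
    · rintro ⟨a, ha, hay⟩
      exact hyQ (mem_image.2 ⟨a, ha, hay⟩)
  · rintro ⟨Q, y⟩ hQy ⟨Q', y'⟩ hQy' h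
    have hQ : (x, y) ∉ Q := fun hQ => hxB ((mem_rookPlacements.1 (mem_sigma.1 hQy).1).1 hQ)
    have hQ' {y} : (x, y) ∉ Q' := fun hQ => hxB ((mem_rookPlacements.1 (mem_sigma.1 hQy').1).1 hQ)
    obtain rfl : y = y' := by
      rcases mem_insert.1 (h ▸ mem_insert_self (x, y) Q) with hy | hy
      · exact (Prod.ext_iff.1 hy).2
      · exact absurd hy hQ'
    obtain rfl : Q = Q' := by rw [← erase_insert hQ, h, erase_insert hQ']
    rfl
  · intro P hP
    obtain ⟨⟨hPBR, hk, hr, hc⟩, hPB⟩ := by simpa only [mem_filter, mem_rookPlacements] using hP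
    obtain ⟨a, haP, haB⟩ := not_subset.1 hPB
    obtain ⟨rfl, hay⟩ : a.1 = x ∧ a.2 ∈ C := by
      simpa only [mem_product, mem_singleton] using (mem_union.1 (hPBR haP)).resolve_left haB
    refine ⟨⟨P.erase a, a.2⟩, mem_sigma.2 ⟨mem_rookPlacements.2 ⟨?_, ?_, ?_, ?_⟩, ?_⟩,
      insert_erase haP⟩
    · intro b hb
      obtain ⟨hba, hbP⟩ := mem_erase.1 hb
      refine (mem_union.1 (hPBR hbP)).resolve_right fun hbR => hba (hr hbP haP ?_)
      exact mem_singleton.1 (mem_product.1 hbR).1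
    · rw [card_erase_of_mem haP, hk, Nat.add_sub_cancel]
    · exact hr.mono (coe_subset.2 (erase_subset a P))
    · exact hc.mono (coe_subset.2 (erase_subset a P))
    · refine mem_sdiff.2 ⟨hay, fun h => ?_⟩
      obtain ⟨b, hb, hba⟩ := mem_image.1 h
      exact (mem_erase.1 hb).1 (hc (mem_erase.1 hb).2 haP hba)

theorem rookNumber_union_row (hx : ∀ a ∈ B, a.1 ≠ x) (hC : ∀ a ∈ B, a.2 ∈ C) (k : ℕ) :
    rookNumber Prod.fst Prod.snd (B ∪ {x} ×ˢ C) (k + 1) =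
      rookNumber Prod.fst Prod.snd B (k + 1) + (#C - k) * rookNumber Prod.fst Prod.snd B k := by
  have avoiding_row : {P ∈ rookPlacements Prod.fst Prod.snd (B ∪ {x} ×ˢ C) (k + 1) | P ⊆ B} =
      rookPlacements Prod.fst Prod.snd B (k + 1) := by
    ext P
    simp only [mem_filter, mem_rookPlacements]
    exact ⟨fun h => ⟨h.2, h.1.2⟩, fun h => ⟨⟨h.1.trans subset_union_left, h.2⟩, h.1⟩⟩
  have free_columns (Q) (hQ : Q ∈ rookPlacements Prod.fst Prod.snd B k) :
      #(C \ Q.image Prod.snd) = #C - k := by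
    obtain ⟨hQB, rfl, -, hc⟩ := mem_rookPlacements.1 hQ
    rw [card_sdiff_of_subset (image_subset_iff.2 fun a ha => hC a (hQB ha)),
      card_image_of_injOn hc]
  rw [rookNumber, ← card_filter_add_card_filter_not (fun P => P ⊆ B), avoiding_row,
    card_rookPlacements_union_row_not_subset hx, card_sigma, sum_congr rfl free_columns,
    sum_const, smul_eq_mul, mul_comm, rookNumber, rookNumber]

end row

end rookNumber

def ferrersBoard (ℓ : ℕ → ℕ) (n : ℕ) : Finset (ℕ × ℕ) :=
  (range n).biUnion fun u => {u} ×ˢ range (ℓ u)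

section ferrersBoard

variable {ℓ : ℕ → ℕ}

@[simp]
theorem mem_ferrersBoard {n : ℕ} {p : ℕ × ℕ} : p ∈ ferrersBoard ℓ n ↔ p.1 < n ∧ p.2 < ℓ p.1 := by
  simp [ferrersBoard, Prod.ext_iff, eq_comm]

theorem ferrersBoard_succ (n : ℕ) :
    ferrersBoard ℓ (n + 1) = ferrersBoard ℓ n ∪ {n} ×ˢ range (ℓ n) := by
  rw [ferrersBoard, range_add_one, biUnion_insert, union_comm, ferrersBoard]

theorem rookNumber_ferrersBoard (hℓ : ∀ n, n ≤ ℓ n ∧ ℓ n ≤ n + 1) (n k : ℕ) :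
    rookNumber Prod.fst Prod.snd (ferrersBoard ℓ n) k =
      stirlingSum #{u ∈ range n | ℓ u = u + 1} (n - #{u ∈ range n | ℓ u = u + 1}) (n - k) := by
  induction n generalizing k with
  | zero =>
    cases k with
    | zero => simp [rookNumber_zero, stirlingSum, stirlingZ, stirling2]
    | succ k =>
      rw [ferrersBoard, range_zero, biUnion_empty, rookNumber_empty_succ,
        stirlingSum_of_neg (by omega)]
  | succ n ih =>
    cases k with
    | zero =>
      have ha : #{u ∈ range (n + 1) | ℓ u = u + 1} ≤ n + 1 :=
        (card_filter_le _ _).trans (card_range _).le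
      rw [rookNumber_zero, show ((n + 1 : ℕ) : ℤ) - (0 : ℕ) = #{u ∈ range (n + 1) | ℓ u = u + 1}
        + (n + 1 - #{u ∈ range (n + 1) | ℓ u = u + 1} : ℕ) by omega, stirlingSum_self]
    | succ k =>
      set a := #{u ∈ range n | ℓ u = u + 1}
      have ha : a ≤ n := (card_filter_le _ _).trans (card_range n).le
      have hn := hℓ n
      have hcolumns (p) (hp : p ∈ ferrersBoard ℓ n) : p.2 ∈ range (ℓ n) := by
        have := hℓ p.1
        have := mem_ferrersBoard.1 hp
        exact mem_range.2 (by omega)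
      rw [ferrersBoard_succ, rookNumber_union_row (fun a ha => (mem_ferrersBoard.1 ha).1.ne)
        hcolumns, ih, ih, card_range, range_add_one, filter_insert,
        show ((n + 1 : ℕ) : ℤ) - (k + 1 : ℕ) = (n : ℤ) - k by push_cast; ring,
        show (n : ℤ) - (k + 1 : ℕ) = (n : ℤ) - k - 1 by push_cast; ring]
      by_cases h : ℓ n = n + 1
      · rw [if_pos h, card_insert_of_notMem (by simp), stirlingSum_succ_left,
          show n + 1 - (a + 1) = n - a by omega, show ((n : ℤ) - k + 1).toNat = ℓ n - k by omega,
          add_comm]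
      · rw [if_neg h, show n + 1 - a = n - a + 1 by omega, stirlingSum_succ_right,
          show ((n : ℤ) - k).toNat = ℓ n - k by omega, add_comm]

end ferrersBoard

def diagSum (p : ℕ × ℕ) : ℕ := p.1 + p.2

def diagDiff (p : ℕ × ℕ) : ℤ := (p.1 : ℤ) - p.2

def bishopColorClass (m e : ℕ) : Finset (ℕ × ℕ) :=
  {p ∈ Icc 1 m ×ˢ Icc 1 m | (p.1 + p.2) % 2 = e}

/- The line `i + j = s` of the `m × m` board has `min (s - 1) (2 * m + 1 - s)` cells, so
`foldRow m` numbers the lines of one colour in order of length, taking them alternately from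
the two corners; `foldCol` numbers the lines `i - j = d` as `d = 0, 1, -1, 2, -2, …`. -/
def foldRow (m s : ℕ) : ℕ := min (s - 2) (2 * m + 1 - s)

def foldCol (d : ℤ) : ℕ := (max (d - 1) (-d)).toNat

def foldCell (m : ℕ) (p : ℕ × ℕ) : ℕ × ℕ := (foldRow m (diagSum p), foldCol (diagDiff p))

section bishopColorClass

variable {m e : ℕ}

theorem mem_bishopColorClass {p : ℕ × ℕ} :
    p ∈ bishopColorClass m e ↔ 1 ≤ p.1 ∧ p.1 ≤ m ∧ 1 ≤ p.2 ∧ p.2 ≤ m ∧ (p.1 + p.2) % 2 = e := by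
  simp [bishopColorClass, and_assoc]

theorem injOn_foldRow : Set.InjOn (foldRow m) (diagSum '' bishopColorClass m e) := by
  rintro _ ⟨a, ha, rfl⟩ _ ⟨b, hb, rfl⟩ h
  rw [mem_coe, mem_bishopColorClass] at ha hb
  simp only [foldRow, diagSum] at h ⊢
  omega

theorem injOn_foldCol : Set.InjOn foldCol (diagDiff '' bishopColorClass m e) := by
  rintro _ ⟨a, ha, rfl⟩ _ ⟨b, hb, rfl⟩ h
  rw [mem_coe, mem_bishopColorClass] at ha hb
  simp only [foldCol, diagDiff] at h ⊢
  omega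

theorem injOn_foldCell : Set.InjOn (foldCell m) (bishopColorClass m e) := by
  rintro a ha b hb h
  rw [mem_coe, mem_bishopColorClass] at ha hb
  simp only [foldCell, foldRow, foldCol, diagSum, diagDiff, Prod.ext_iff] at h ⊢
  omega

theorem image_foldCell_bishopColorClass (he : e < 2) :
    (bishopColorClass m e).image (foldCell m) = ferrersBoard (fun u => u + (u + e + 1) % 2) m := by
  ext ⟨u, v⟩
  simp only [mem_image, mem_bishopColorClass, mem_ferrersBoard, foldCell, foldRow, foldCol,
    diagSum, diagDiff, Prod.ext_iff, Prod.exists]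
  constructor
  · rintro ⟨i, j, ⟨hi, hi', hj, hj', hij⟩, rfl, rfl⟩
    omega
  · rintro ⟨hu, hv⟩
    obtain ⟨s, hs⟩ : ∃ s : ℕ, 2 ≤ s ∧ s ≤ 2 * m ∧ s % 2 = e ∧ min (s - 2) (2 * m + 1 - s) = u := by
      by_cases h : u % 2 = e
      · exact ⟨u + 2, by omega⟩
      · exact ⟨2 * m + 1 - u, by omega⟩
    obtain ⟨d, hd⟩ : ∃ d : ℤ, (d - s) % 2 = 0 ∧ (max (d - 1) (-d)).toNat = v := by
      by_cases h : v % 2 = e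
      · exact ⟨-v, by omega⟩
      · exact ⟨v + 1, by omega⟩
    obtain ⟨i, j, rfl, rfl⟩ : ∃ i j : ℕ, i + j = s ∧ (i : ℤ) - j = d :=
      ⟨((s + d) / 2).toNat, ((s - d) / 2).toNat, by omega, by omega⟩
    exact ⟨i, j, by omega⟩

theorem card_filter_range_mod_two (he : e < 2) (n : ℕ) :
    #{u ∈ range n | u % 2 = e} = (n + 1 - e) / 2 := by
  induction n with
  | zero => simp only [range_zero, filter_empty, card_empty]; omega
  | succ n ih =>
    rw [range_add_one, filter_insert]
    split_ifs with h
    · rw [card_insert_of_notMem (by simp), ih]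
      omega
    · rw [ih]
      omega

theorem rookNumber_bishopColorClass (he : e < 2) (k : ℕ) :
    rookNumber diagSum diagDiff (bishopColorClass m e) k =
      stirlingSum ((m + 1 - e) / 2) ((m + e) / 2) (m - k) := by
  have hrows : #{u ∈ range m | u + (u + e + 1) % 2 = u + 1} = (m + 1 - e) / 2 := by
    rw [← card_filter_range_mod_two he]
    exact congrArg card (filter_congr fun u _ => by omega)
  rw [← rookNumber_comp _ _ injOn_foldRow injOn_foldCol]
  change rookNumber (Prod.fst ∘ foldCell m) (Prod.snd ∘ foldCell m) _ k = _
  rw [← rookNumber_image _ _ injOn_foldCell, image_foldCell_bishopColorClass he,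
    rookNumber_ferrersBoard (fun n => ⟨by omega, by omega⟩), hrows]
  congr 1
  omega

end bishopColorClass

theorem bishopCount_eq_rookNumber (m k : ℕ) :
    bishopCount m k = rookNumber diagSum diagDiff (Icc 1 m ×ˢ Icc 1 m) k := by
  rw [bishopCount, rookNumber]
  congr 1
  ext P
  simp only [mem_filter, mem_powersetCard, mem_rookPlacements, and_assoc]
  refine and_congr_right fun _ => and_congr_right fun _ =>
    ⟨fun h => ⟨fun a ha b hb hab => by_contra fun hne => (h a ha b hb hne).1 hab,
      fun a ha b hb hab => by_contra fun hne => (h a ha b hb hne).2 hab⟩,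
    fun h a ha b hb hab => ⟨fun hs => hab (h.1 ha hb hs), fun hd => hab (h.2 ha hb hd)⟩⟩

theorem bishopCount_eq_sum_antidiagonal (m k : ℕ) :
    bishopCount m k = ∑ p ∈ antidiagonal k, stirlingSum ((m + 1) / 2) (m / 2) (m - p.1) *
      stirlingSum (m / 2) ((m + 1) / 2) (m - p.2) := by
  have hboard : Icc 1 m ×ˢ Icc 1 m = bishopColorClass m 0 ∪ bishopColorClass m 1 := by
    ext p
    simp only [mem_union, mem_bishopColorClass, mem_product, mem_Icc]
    omega
  rw [bishopCount_eq_rookNumber, hboard, rookNumber_union]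
  · exact sum_congr rfl fun p _ => by
      rw [rookNumber_bishopColorClass (by norm_num), rookNumber_bishopColorClass (by norm_num)]
      rfl
  all_goals
    intro a ha b hb
    rw [mem_bishopColorClass] at ha hb
    simp only [diagSum, diagDiff]
    omega

/-- Arshon–Kotěšovec formula for nonattacking bishops on the square board. -/
theorem bishop_arshon_kotesovec (m k : ℕ) :
    bishopCount m k =
      ∑ j ∈ Finset.range (m + 1), ∑ i ∈ Finset.range ((m + 1) / 2 + 1),
        Nat.choose ((m + 1) / 2) i * stirlingZ (i + m / 2) ((m : ℤ) - j) *
          ∑ l ∈ Finset.range (m / 2 + 1),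
            Nat.choose (m / 2) l * stirlingZ (l + (m + 1) / 2) ((m : ℤ) - k + j) := by
  set A := stirlingSum ((m + 1) / 2) (m / 2)
  set B := stirlingSum (m / 2) ((m + 1) / 2)
  have hA (j : ℕ) (hj : j ∉ range (m + 1)) : A (m - j) = 0 :=
    stirlingSum_of_neg (by have := mem_range.not.1 hj; omega)
  have hB (j : ℕ) (hj : j ∉ range (k + 1)) : B (m - k + j) = 0 :=
    stirlingSum_of_lt (by have := mem_range.not.1 hj; omega)
  calc bishopCount m k = ∑ j ∈ range (k + 1), A (m - j) * B (m - k + j) := by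
        rw [bishopCount_eq_sum_antidiagonal,
          Nat.sum_antidiagonal_eq_sum_range_succ (fun i j => A (m - i) * B (m - j))]
        refine sum_congr rfl fun j hj => ?_
        rw [Nat.cast_sub (by have := mem_range.1 hj; omega), sub_sub_eq_add_sub, add_sub_right_comm]
    _ = ∑ j ∈ range (m + k + 1), A (m - j) * B (m - k + j) :=
        sum_subset (range_subset_range.2 (by omega)) fun j _ hj => by rw [hB j hj, mul_zero]
    _ = ∑ j ∈ range (m + 1), A (m - j) * B (m - k + j) :=
        (sum_subset (range_subset_range.2 (by omega)) fun j _ hj => by rw [hA j hj, zero_mul]).symm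
    _ = _ := by simp only [A, B, stirlingSum, sum_mul]
end

section
/- For all integers m ≥ 1 and k ≥ 1, R_W(m,k) = R_W(m−1,k) + (m−k+π(m))·R_W(m−1,k−1), as an equality of integers (note m−k+π(m) may be negative, in which case the corresponding count R_W(m−1,k−1) is 0). Moreover R_W(m,0) = 1 for all m ≥ 0 and R_W(0,k) = 0 for all k ≥ 1. -/
open Finset

/-- `whiteCount m k` is the number of `k`-element subsets `P` of the white squares
`{(i,j) ∈ {1,…,m} × {1,…,m} : i+j even}` such that any two distinct elements `(i,j)`
and `(i',j')` of `P` satisfy `i+j ≠ i'+j'` and `i−j ≠ i'−j'` (nonattacking bishops on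
the white squares of the `m × m` board). -/
def whiteCount (m k : ℕ) : ℕ :=
  ((((Finset.Icc 1 m ×ˢ Finset.Icc 1 m).filter (fun a => Even (a.1 + a.2))).powersetCard
      k).filter
    (fun P => ∀ a ∈ P, ∀ b ∈ P, a ≠ b →
      a.1 + a.2 ≠ b.1 + b.2 ∧ (a.1 : ℤ) - a.2 ≠ (b.1 : ℤ) - b.2)).card

namespace WhiteBishop

def Wb (m : ℕ) : Finset (ℕ × ℕ) :=
  (Finset.Icc 1 m ×ˢ Finset.Icc 1 m).filter (fun a => Even (a.1 + a.2))

def Ab (m k : ℕ) : Finset (Finset (ℕ × ℕ)) :=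
  ((Wb m).powersetCard k).filter
    (fun P => ∀ a ∈ P, ∀ b ∈ P, a ≠ b →
      a.1 + a.2 ≠ b.1 + b.2 ∧ (a.1 : ℤ) - a.2 ≠ (b.1 : ℤ) - b.2)

lemma whiteCount_eq (m k : ℕ) : whiteCount m k = (Ab m k).card := rfl

lemma mem_Wb {m : ℕ} {a : ℕ × ℕ} :
    a ∈ Wb m ↔ (1 ≤ a.1 ∧ a.1 ≤ m) ∧ (1 ≤ a.2 ∧ a.2 ≤ m) ∧ (a.1 + a.2) % 2 = 0 := by
  simp [Wb, Finset.mem_filter, Finset.mem_product, Nat.even_iff, and_assoc]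

lemma mem_Ab {m k : ℕ} {P : Finset (ℕ × ℕ)} :
    P ∈ Ab m k ↔ P ⊆ Wb m ∧ P.card = k ∧
      (∀ a ∈ P, ∀ b ∈ P, a ≠ b →
        a.1 + a.2 ≠ b.1 + b.2 ∧ (a.1 : ℤ) - a.2 ≠ (b.1 : ℤ) - b.2) := by
  simp [Ab, Finset.mem_filter, Finset.mem_powersetCard, and_assoc]

/-- the sum coordinate of the inserted diagonal -/
def s0 (m : ℕ) : ℕ := 2 * (m / 2) + 2

def iota (m : ℕ) (a : ℕ × ℕ) : ℕ × ℕ :=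
  if s0 m ≤ a.1 + a.2 then (a.1 + 1, a.2 + 1) else a

/-- the inserted diagonal -/
def Dg (m : ℕ) : Finset (ℕ × ℕ) := (Wb m).filter (fun c => c.1 + c.2 = s0 m)

/-- placements avoiding the inserted diagonal -/
def A0 (m k : ℕ) : Finset (Finset (ℕ × ℕ)) :=
  (Ab m k).filter (fun P => ∀ c ∈ P, c.1 + c.2 ≠ s0 m)

lemma iota_sum (m : ℕ) (a : ℕ × ℕ) :
    (iota m a).1 + (iota m a).2 = if s0 m ≤ a.1 + a.2 then a.1 + a.2 + 2 else a.1 + a.2 := by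
  unfold iota; split <;> simp <;> omega

lemma iota_diff (m : ℕ) (a : ℕ × ℕ) :
    ((iota m a).1 : ℤ) - (iota m a).2 = (a.1 : ℤ) - a.2 := by
  unfold iota; split <;> simp

lemma iota_sum_inj {m : ℕ} {a b : ℕ × ℕ} (h : (iota m a).1 + (iota m a).2 = (iota m b).1 + (iota m b).2) :
    a.1 + a.2 = b.1 + b.2 := by
  rw [iota_sum, iota_sum] at h
  split at h <;> split at h <;> omega

lemma iota_inj {m : ℕ} : Function.Injective (iota m) := by
  intro a b h
  have hs : a.1 + a.2 = b.1 + b.2 := iota_sum_inj (by rw [h])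
  unfold iota at h
  by_cases hc : s0 m ≤ a.1 + a.2
  · rw [if_pos hc, if_pos (hs ▸ hc)] at h
    rw [Prod.ext_iff] at h ⊢
    simp at h ⊢
    omega
  · rwa [if_neg hc, if_neg (hs ▸ hc)] at h

lemma iota_mem {m : ℕ} (hm : 1 ≤ m) {a : ℕ × ℕ} (ha : a ∈ Wb (m - 1)) :
    iota m a ∈ Wb m ∧ (iota m a).1 + (iota m a).2 ≠ s0 m := by
  rw [mem_Wb] at ha
  unfold iota s0 at *
  split <;> rw [mem_Wb] <;> simp <;> omega

lemma iota_surj {m : ℕ} (hm : 1 ≤ m) {b : ℕ × ℕ} (hb : b ∈ Wb m)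
    (hbd : b.1 + b.2 ≠ s0 m) : ∃ a ∈ Wb (m - 1), iota m a = b := by
  rw [mem_Wb] at hb
  by_cases h : b.1 + b.2 < s0 m
  · refine ⟨b, ?_, ?_⟩
    · rw [mem_Wb]; unfold s0 at h; omega
    · unfold iota; rw [if_neg (by omega)]
  · refine ⟨(b.1 - 1, b.2 - 1), ?_, ?_⟩
    · rw [mem_Wb]; unfold s0 at *; simp; omega
    · unfold iota; unfold s0 at *; rw [if_pos (by simp; omega)]
      simp [Prod.ext_iff]; omega

lemma iota_sum_congr {m : ℕ} {a b : ℕ × ℕ} (h : a.1 + a.2 = b.1 + b.2) :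
    (iota m a).1 + (iota m a).2 = (iota m b).1 + (iota m b).2 := by
  rw [iota_sum, iota_sum, h]

lemma card_A0 {m : ℕ} (hm : 1 ≤ m) (j : ℕ) : (A0 m j).card = whiteCount (m - 1) j := by
  rw [whiteCount_eq]
  symm
  apply Finset.card_bij (fun P _ => P.image (iota m))
  · intro P hP
    rw [mem_Ab] at hP
    obtain ⟨hsub, hcard, hval⟩ := hP
    rw [A0, Finset.mem_filter, mem_Ab]
    refine ⟨⟨?_, ?_, ?_⟩, ?_⟩
    · intro x hx
      simp only [Finset.mem_image] at hx
      obtain ⟨a, ha, rfl⟩ := hx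
      exact (iota_mem hm (hsub ha)).1
    · rw [Finset.card_image_of_injective _ iota_inj, hcard]
    · rintro x hx y hy hxy
      simp only [Finset.mem_image] at hx hy
      obtain ⟨a, ha, rfl⟩ := hx
      obtain ⟨b, hb, rfl⟩ := hy
      have hab : a ≠ b := fun h => hxy (by rw [h])
      obtain ⟨h1, h2⟩ := hval a ha b hb hab
      constructor
      · intro h; exact h1 (iota_sum_inj h)
      · rw [iota_diff, iota_diff]; exact h2
    · intro c hc
      simp only [Finset.mem_image] at hc
      obtain ⟨a, ha, rfl⟩ := hc
      exact (iota_mem hm (hsub ha)).2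
  · intro P hP P' hP' h
    exact Finset.image_injective iota_inj h
  · intro P' hP'
    rw [A0, Finset.mem_filter, mem_Ab] at hP'
    obtain ⟨⟨hsub, hcard, hval⟩, havoid⟩ := hP'
    set P : Finset (ℕ × ℕ) := (Wb (m-1)).filter (fun a => iota m a ∈ P') with hPdef
    have himg : P.image (iota m) = P' := by
      apply Finset.Subset.antisymm
      · intro x hx
        simp only [hPdef, Finset.mem_image, Finset.mem_filter] at hx
        obtain ⟨a, ⟨_, ha2⟩, rfl⟩ := hx
        exact ha2
      · intro b hb
        obtain ⟨a, ha, hab⟩ := iota_surj hm (hsub hb) (havoid b hb)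
        simp only [hPdef, Finset.mem_image, Finset.mem_filter]
        exact ⟨a, ⟨ha, hab ▸ hb⟩, hab⟩
    refine ⟨P, ?_, himg⟩
    rw [mem_Ab]
    refine ⟨Finset.filter_subset _ _, ?_, ?_⟩
    · rw [← Finset.card_image_of_injective P iota_inj, himg, hcard]
    · intro a ha b hb hab
      have ha' : iota m a ∈ P' := (Finset.mem_filter.1 ha).2
      have hb' : iota m b ∈ P' := (Finset.mem_filter.1 hb).2
      have hne : iota m a ≠ iota m b := fun h => hab (iota_inj h)
      obtain ⟨h1, h2⟩ := hval _ ha' _ hb' hne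
      constructor
      · intro h; exact h1 (iota_sum_congr h)
      · rw [iota_diff, iota_diff] at h2; exact h2

lemma mem_Dg {m : ℕ} {c : ℕ × ℕ} :
    c ∈ Dg m ↔ s0 m - m ≤ c.1 ∧ c.1 ≤ m ∧ c.2 = s0 m - c.1 := by
  rw [Dg, Finset.mem_filter, mem_Wb]
  unfold s0
  omega

lemma card_Dg {m : ℕ} (hm : 1 ≤ m) : (Dg m).card = 2 * m + 1 - s0 m := by
  have : (Dg m).card = (Finset.Icc (s0 m - m) m).card := by
    apply Finset.card_bij' (fun c _ => c.1) (fun i _ => (i, s0 m - i))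
    · intro c hc
      rw [mem_Dg] at hc
      rw [Finset.mem_Icc]
      omega
    · intro i hi
      rw [Finset.mem_Icc] at hi
      rw [mem_Dg]
      dsimp only
      refine ⟨?_, ?_, rfl⟩ <;> (simp only [s0] at *; omega)
    · intro c hc
      rw [mem_Dg] at hc
      rw [Prod.ext_iff]
      exact ⟨rfl, hc.2.2.symm⟩
    · intro i _
      rfl
  rw [this, Nat.card_Icc]
  simp only [s0]
  omega

lemma diff_surj {m : ℕ} (hm : 1 ≤ m) {b : ℕ × ℕ} (hb : b ∈ Wb m) :
    ∃ c ∈ Dg m, (c.1 : ℤ) - c.2 = (b.1 : ℤ) - b.2 := by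
  rw [mem_Wb] at hb
  refine ⟨((s0 m + b.1 - b.2) / 2, s0 m - (s0 m + b.1 - b.2) / 2), ?_, ?_⟩
  · rw [mem_Dg]
    dsimp only
    refine ⟨?_, ?_, rfl⟩ <;> (simp only [s0] at *; omega)
  · dsimp only
    simp only [s0] at *
    omega

lemma diff_inj_Dg {m : ℕ} {c c' : ℕ × ℕ} (hc : c ∈ Dg m) (hc' : c' ∈ Dg m)
    (h : (c.1 : ℤ) - c.2 = (c'.1 : ℤ) - c'.2) : c = c' := by
  rw [mem_Dg] at hc hc'
  rw [Prod.ext_iff]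
  simp only [s0] at *
  omega

lemma mem_Dg' {m : ℕ} {c : ℕ × ℕ} :
    c ∈ Dg m ↔ c ∈ Wb m ∧ c.1 + c.2 = s0 m := by
  unfold Dg; exact Finset.mem_filter

lemma card_compat {m k : ℕ} (hm : 1 ≤ m) {Q : Finset (ℕ × ℕ)} (hQ : Q ∈ A0 m k) :
    k ≤ (Dg m).card ∧
    ((Dg m).filter (fun c => ∀ b ∈ Q, (c.1 : ℤ) - c.2 ≠ (b.1 : ℤ) - b.2)).card
      = (Dg m).card - k := by
  rw [A0, Finset.mem_filter, mem_Ab] at hQ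
  obtain ⟨⟨hsub, hcard, hval⟩, _⟩ := hQ
  have hN : ((Dg m).filter
      (fun c => ¬ ∀ b ∈ Q, (c.1 : ℤ) - c.2 ≠ (b.1 : ℤ) - b.2)).card = k := by
    rw [← hcard]
    symm
    apply Finset.card_bij (fun b hb => (diff_surj hm (hsub hb)).choose)
    · intro b hb
      obtain ⟨hc1, hc2⟩ := (diff_surj hm (hsub hb)).choose_spec
      rw [Finset.mem_filter]
      refine ⟨hc1, ?_⟩
      push_neg
      exact ⟨b, hb, hc2⟩
    · intro a ha b hb h
      obtain ⟨ha1, ha2⟩ := (diff_surj hm (hsub ha)).choose_spec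
      obtain ⟨hb1, hb2⟩ := (diff_surj hm (hsub hb)).choose_spec
      by_contra hne
      exact (hval a ha b hb hne).2 (by rw [← ha2, ← hb2, h])
    · intro c hc
      rw [Finset.mem_filter] at hc
      obtain ⟨hc1, hc2⟩ := hc
      push_neg at hc2
      obtain ⟨b, hb, hdiff⟩ := hc2
      refine ⟨b, hb, ?_⟩
      obtain ⟨h1, h2⟩ := (diff_surj hm (hsub hb)).choose_spec
      exact diff_inj_Dg h1 hc1 (by rw [h2, hdiff])
  have hle : ((Dg m).filter
      (fun c => ¬ ∀ b ∈ Q, (c.1 : ℤ) - c.2 ≠ (b.1 : ℤ) - b.2)).card ≤ (Dg m).card :=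
    Finset.card_le_card (Finset.filter_subset _ _)
  have hT := Finset.card_filter_add_card_filter_not (s := Dg m)
      (p := fun c => ∀ b ∈ Q, (c.1 : ℤ) - c.2 ≠ (b.1 : ℤ) - b.2)
  constructor
  · omega
  · omega

lemma main_split {m k : ℕ} (hm : 1 ≤ m) (hk : 1 ≤ k) :
    whiteCount m k = (A0 m k).card + (A0 m (k-1)).card * ((Dg m).card - (k-1)) := by
  have hsplit : (A0 m k).card
      + ((Ab m k).filter (fun P => ¬ ∀ c ∈ P, c.1 + c.2 ≠ s0 m)).card = (Ab m k).card :=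
    Finset.card_filter_add_card_filter_not
      (s := Ab m k) (p := fun P => ∀ c ∈ P, c.1 + c.2 ≠ s0 m)
  have hA1 : ((Ab m k).filter (fun P => ¬ ∀ c ∈ P, c.1 + c.2 ≠ s0 m)).card
      = ((A0 m (k-1)).sigma (fun Q => (Dg m).filter
          (fun c => ∀ b ∈ Q, (c.1 : ℤ) - c.2 ≠ (b.1 : ℤ) - b.2))).card := by
    symm
    apply Finset.card_bij (fun x _ => insert x.2 x.1)
    · intro x hx
      obtain ⟨Q, c⟩ := x
      rw [Finset.mem_sigma] at hx
      dsimp only at hx ⊢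
      obtain ⟨hQ, hc⟩ := hx
      rw [Finset.mem_filter] at hc
      obtain ⟨hcD, hcompat⟩ := hc
      rw [A0, Finset.mem_filter, mem_Ab] at hQ
      obtain ⟨⟨hsub, hcard, hval⟩, havoid⟩ := hQ
      rw [mem_Dg'] at hcD
      obtain ⟨hcW, hcs⟩ := hcD
      have hcQ : c ∉ Q := fun h => havoid c h hcs
      rw [Finset.mem_filter, mem_Ab]
      refine ⟨⟨?_, ?_, ?_⟩, ?_⟩
      · intro x hx
        rcases Finset.mem_insert.1 hx with rfl | hx'
        · exact hcW
        · exact hsub hx'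
      · rw [Finset.card_insert_of_notMem hcQ, hcard]
        omega
      · intro a ha b hb hab
        rcases Finset.mem_insert.1 ha with rfl | ha' <;>
          rcases Finset.mem_insert.1 hb with rfl | hb'
        · exact absurd rfl hab
        · exact ⟨fun h => havoid b hb' (by omega), hcompat b hb'⟩
        · exact ⟨fun h => havoid a ha' (by omega), fun h => hcompat a ha' h.symm⟩
        · exact hval a ha' b hb' hab
      · intro hall
        exact hall c (Finset.mem_insert_self c Q) hcs
    · intro x hx x' hx' h
      obtain ⟨Q, c⟩ := x
      obtain ⟨Q', c'⟩ := x'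
      rw [Finset.mem_sigma] at hx hx'
      dsimp only at hx hx' h
      obtain ⟨hQ, hc⟩ := hx
      obtain ⟨hQ', hc'⟩ := hx'
      have hcs : c.1 + c.2 = s0 m := (mem_Dg'.1 (Finset.mem_filter.1 hc).1).2
      have hc's : c'.1 + c'.2 = s0 m := (mem_Dg'.1 (Finset.mem_filter.1 hc').1).2
      have havoid : ∀ b ∈ Q, b.1 + b.2 ≠ s0 m := (Finset.mem_filter.1 hQ).2
      have havoid' : ∀ b ∈ Q', b.1 + b.2 ≠ s0 m := (Finset.mem_filter.1 hQ').2
      have hcc : c = c' := by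
        have hmem : c ∈ insert c' Q' := h ▸ Finset.mem_insert_self c Q
        rcases Finset.mem_insert.1 hmem with h' | h'
        · exact h'
        · exact absurd hcs (havoid' c h')
      subst hcc
      have hQQ : Q = Q' := by
        have h1 : c ∉ Q := fun hcQ => havoid c hcQ hcs
        have h2 : c ∉ Q' := fun hcQ => havoid' c hcQ hcs
        rw [← Finset.erase_insert h1, ← Finset.erase_insert h2, h]
      subst hQQ
      rfl
    · intro P hP
      rw [Finset.mem_filter, mem_Ab] at hP
      obtain ⟨⟨hsub, hcard, hval⟩, hex⟩ := hP
      push_neg at hex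
      obtain ⟨c, hcP, hcs⟩ := hex
      refine ⟨⟨P.erase c, c⟩, ?_, ?_⟩
      · rw [Finset.mem_sigma]
        constructor
        · rw [A0, Finset.mem_filter, mem_Ab]
          refine ⟨⟨?_, ?_, ?_⟩, ?_⟩
          · exact (Finset.erase_subset _ _).trans hsub
          · rw [Finset.card_erase_of_mem hcP, hcard]
          · intro a ha b hb hab
            exact hval a (Finset.mem_of_mem_erase ha) b (Finset.mem_of_mem_erase hb) hab
          · intro b hb hbs
            have hbP := Finset.mem_of_mem_erase hb
            have hbc := Finset.ne_of_mem_erase hb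
            exact (hval b hbP c hcP hbc).1 (by rw [hbs, hcs])
        · rw [Finset.mem_filter, mem_Dg']
          refine ⟨⟨hsub hcP, hcs⟩, ?_⟩
          intro b hb
          have hbP := Finset.mem_of_mem_erase hb
          have hbc := Finset.ne_of_mem_erase hb
          exact (hval c hcP b hbP (Ne.symm hbc)).2
      · exact Finset.insert_erase hcP
  have hsum : ((A0 m (k-1)).sigma (fun Q => (Dg m).filter
          (fun c => ∀ b ∈ Q, (c.1 : ℤ) - c.2 ≠ (b.1 : ℤ) - b.2))).card
      = (A0 m (k-1)).card * ((Dg m).card - (k-1)) := by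
    rw [Finset.card_sigma]
    have h2 : ∑ Q ∈ A0 m (k-1), ((Dg m).filter
        (fun c => ∀ b ∈ Q, (c.1 : ℤ) - c.2 ≠ (b.1 : ℤ) - b.2)).card
        = ∑ _Q ∈ A0 m (k-1), ((Dg m).card - (k-1)) :=
      Finset.sum_congr rfl (fun Q hQ => (card_compat hm hQ).2)
    rw [h2, Finset.sum_const, smul_eq_mul]
  rw [whiteCount_eq]
  omega

end WhiteBishop

open WhiteBishop in
/-- Recurrence for nonattacking bishop placements on the white squares, with the
parity function `π(m) = 1` if `m` is odd and `0` otherwise. -/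
theorem white_bishop_recurrence :
    (∀ m k : ℕ, 1 ≤ m → 1 ≤ k →
      (whiteCount m k : ℤ) =
        whiteCount (m - 1) k +
          ((m : ℤ) - k + (if Odd m then 1 else 0)) * whiteCount (m - 1) (k - 1)) ∧
    (∀ m : ℕ, whiteCount m 0 = 1) ∧
    (∀ k : ℕ, 1 ≤ k → whiteCount 0 k = 0) := by
  refine ⟨?_, ?_, ?_⟩
  · intro m k hm hk
    have h1 : (A0 m k).card = whiteCount (m-1) k := card_A0 hm k
    have h2 : (A0 m (k-1)).card = whiteCount (m-1) (k-1) := card_A0 hm (k-1)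
    have hsplit := main_split hm hk
    by_cases h0 : whiteCount (m-1) (k-1) = 0
    · rw [hsplit, h1, h2, h0]
      push_cast
      ring
    · obtain ⟨Q, hQ⟩ := Finset.card_pos.1 (show 0 < (A0 m (k-1)).card by omega)
      have hle := (card_compat hm hQ).1
      have hDg := card_Dg hm
      have hpi : (if Odd m then (1:ℤ) else 0) = ((m % 2 : ℕ) : ℤ) := by
        by_cases hom : Odd m
        · rw [if_pos hom]
          rw [Nat.odd_iff] at hom
          rw [hom]
          norm_num
        · rw [if_neg hom]
          rw [Nat.odd_iff] at hom
          omega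
      have key : (((Dg m).card : ℤ)) - ((k-1 : ℕ) : ℤ) = (m:ℤ) - k + ((m % 2 : ℕ) : ℤ) := by
        simp only [s0] at hDg
        omega
      rw [hsplit, h1, h2, Nat.cast_add, Nat.cast_mul, Nat.cast_sub hle, hpi, key]
      ring
  · intro m
    rw [whiteCount_eq, WhiteBishop.Ab, Finset.powersetCard_zero, Finset.filter_singleton,
      if_pos (by simp)]
    simp
  · intro k hk
    rw [whiteCount_eq, WhiteBishop.Ab]
    have h : Wb 0 = ∅ := by
      rw [WhiteBishop.Wb]
      simp [Finset.Icc_eq_empty_of_lt (by omega : (1:ℕ) > 0)]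
    rw [h]
    rw [Finset.powersetCard_eq_empty.2 (by simp; omega)]
    simp
end

section
/- For all integers m ≥ 1 and k ≥ 1, R_K(m,k) = R_K(m−1,k) + (m−k+1−π(m))·R_K(m−1,k−1), as an equality of integers. Moreover R_K(m,0) = 1 for all m ≥ 0 and R_K(0,k) = 0 for all k ≥ 1. -/
open Finset

/-- `blackCount m k` is the number of `k`-element subsets `P` of the black squares
`{(i,j) ∈ {1,…,m} × {1,…,m} : i+j odd}` such that any two distinct elements `(i,j)`
and `(i',j')` of `P` satisfy `i+j ≠ i'+j'` and `i−j ≠ i'−j'` (nonattacking bishops on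
the black squares of the `m × m` board). -/
def blackCount (m k : ℕ) : ℕ :=
  ((((Finset.Icc 1 m ×ˢ Finset.Icc 1 m).filter (fun a => Odd (a.1 + a.2))).powersetCard
      k).filter
    (fun P => ∀ a ∈ P, ∀ b ∈ P, a ≠ b →
      a.1 + a.2 ≠ b.1 + b.2 ∧ (a.1 : ℤ) - a.2 ≠ (b.1 : ℤ) - b.2)).card

namespace BlackAux

def cells (m : ℕ) : Finset (ℕ × ℕ) :=
  (Finset.Icc 1 m ×ˢ Finset.Icc 1 m).filter (fun a => Odd (a.1 + a.2))

def Good (P : Finset (ℕ × ℕ)) : Prop :=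
  ∀ a ∈ P, ∀ b ∈ P, a ≠ b → a.1 + a.2 ≠ b.1 + b.2 ∧ (a.1 : ℤ) - a.2 ≠ (b.1 : ℤ) - b.2

instance : DecidablePred Good := fun P => by unfold Good; infer_instance

def configs (m k : ℕ) : Finset (Finset (ℕ × ℕ)) :=
  ((cells m).powersetCard k).filter Good

lemma mem_cells {m : ℕ} {c : ℕ × ℕ} :
    c ∈ cells m ↔ 1 ≤ c.1 ∧ c.1 ≤ m ∧ 1 ≤ c.2 ∧ c.2 ≤ m ∧ (c.1 + c.2) % 2 = 1 := by
  simp [cells, Finset.mem_filter, Finset.mem_product, Nat.odd_iff, and_assoc]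

lemma mem_configs {m k : ℕ} {P : Finset (ℕ × ℕ)} :
    P ∈ configs m k ↔ P ⊆ cells m ∧ P.card = k ∧ Good P := by
  simp [configs, Finset.mem_powersetCard, and_assoc]

lemma Good.sum_inj {P : Finset (ℕ × ℕ)} (h : Good P) {a b : ℕ × ℕ} (ha : a ∈ P) (hb : b ∈ P)
    (hs : a.1 + a.2 = b.1 + b.2) : a = b := by
  by_contra hne; exact (h a ha b hb hne).1 hs

lemma Good.diff_inj {P : Finset (ℕ × ℕ)} (h : Good P) {a b : ℕ × ℕ} (ha : a ∈ P) (hb : b ∈ P)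
    (hs : (a.1 : ℤ) - a.2 = (b.1 : ℤ) - b.2) : a = b := by
  by_contra hne; exact (h a ha b hb hne).2 hs

lemma good_of {P : Finset (ℕ × ℕ)}
    (h1 : ∀ a ∈ P, ∀ b ∈ P, a.1 + a.2 = b.1 + b.2 → a = b)
    (h2 : ∀ a ∈ P, ∀ b ∈ P, (a.1 : ℤ) - a.2 = (b.1 : ℤ) - b.2 → a = b) : Good P := by
  intro a ha b hb hne
  exact ⟨fun hs => hne (h1 a ha b hb hs), fun hd => hne (h2 a ha b hb hd)⟩

lemma Good.mono {P Q : Finset (ℕ × ℕ)} (h : Good P) (hQP : Q ⊆ P) : Good Q :=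
  fun a ha b hb hne => h a (hQP ha) b (hQP hb) hne

def sdiag (m : ℕ) : ℕ := 2 * (m / 2) + 1

lemma sdiag_facts (m : ℕ) : sdiag m % 2 = 1 ∧ m ≤ sdiag m ∧ sdiag m ≤ m + 1 := by
  unfold sdiag; omega

def down (s0 : ℕ) (c : ℕ × ℕ) : ℕ × ℕ := if s0 < c.1 + c.2 then (c.1 - 1, c.2 - 1) else c
def up (s0 : ℕ) (c : ℕ × ℕ) : ℕ × ℕ := if s0 ≤ c.1 + c.2 then (c.1 + 1, c.2 + 1) else c

section
variable {m : ℕ}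

lemma down_mem {c : ℕ × ℕ} (hm : 1 ≤ m) (hc : c ∈ cells m) (hne : c.1 + c.2 ≠ sdiag m) :
    down (sdiag m) c ∈ cells (m - 1) := by
  obtain ⟨i, j⟩ := c
  rw [mem_cells] at hc
  have hs := sdiag_facts m
  unfold down
  split_ifs with h <;> rw [mem_cells] <;> simp only [] <;> omega

lemma down_diff {c : ℕ × ℕ} (hc : c ∈ cells m) :
    ((down (sdiag m) c).1 : ℤ) - (down (sdiag m) c).2 = (c.1 : ℤ) - c.2 := by
  obtain ⟨i, j⟩ := c
  rw [mem_cells] at hc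
  unfold down
  split_ifs with h <;> simp only [] <;> omega

lemma down_sum_inj {c c' : ℕ × ℕ} (hc : c ∈ cells m) (hc' : c' ∈ cells m)
    (hne : c.1 + c.2 ≠ sdiag m) (hne' : c'.1 + c'.2 ≠ sdiag m)
    (heq : (down (sdiag m) c).1 + (down (sdiag m) c).2
      = (down (sdiag m) c').1 + (down (sdiag m) c').2) : c.1 + c.2 = c'.1 + c'.2 := by
  obtain ⟨i, j⟩ := c; obtain ⟨i', j'⟩ := c'
  rw [mem_cells] at hc hc'
  have hs := sdiag_facts m
  unfold down at heq
  split_ifs at heq <;> simp only [] at heq ⊢ <;> omega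

lemma up_down {c : ℕ × ℕ} (hc : c ∈ cells m) (hne : c.1 + c.2 ≠ sdiag m) :
    up (sdiag m) (down (sdiag m) c) = c := by
  obtain ⟨i, j⟩ := c
  rw [mem_cells] at hc
  have hs := sdiag_facts m
  unfold down up
  split_ifs with h1 h2 h3 <;> simp only [Prod.mk.injEq] <;> first
    | (constructor <;> omega)
    | omega
    | rfl
    | skip
  all_goals (exfalso; simp only [] at *; omega)

lemma up_mem {c : ℕ × ℕ} (hm : 1 ≤ m) (hc : c ∈ cells (m - 1)) :
    up (sdiag m) c ∈ cells m ∧ (up (sdiag m) c).1 + (up (sdiag m) c).2 ≠ sdiag m := by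
  obtain ⟨i, j⟩ := c
  rw [mem_cells] at hc
  have hs := sdiag_facts m
  unfold up
  split_ifs with h <;> constructor <;> (try rw [mem_cells]) <;> simp only [] <;> omega

lemma down_up {c : ℕ × ℕ} (hc : c ∈ cells (m - 1)) :
    down (sdiag m) (up (sdiag m) c) = c := by
  obtain ⟨i, j⟩ := c
  rw [mem_cells] at hc
  have hs := sdiag_facts m
  unfold down up
  split_ifs with h1 h2 h3 <;> simp only [Prod.mk.injEq] <;> first
    | (constructor <;> omega)
    | omega
    | rfl
    | skip
  all_goals (exfalso; simp only [] at *; omega)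

lemma up_diff (c : ℕ × ℕ) :
    ((up (sdiag m) c).1 : ℤ) - (up (sdiag m) c).2 = (c.1 : ℤ) - c.2 := by
  obtain ⟨i, j⟩ := c
  unfold up
  split_ifs with h <;> simp only [] <;> omega

lemma up_sum_inj {c c' : ℕ × ℕ} (hc : c ∈ cells (m - 1)) (hc' : c' ∈ cells (m - 1))
    (heq : (up (sdiag m) c).1 + (up (sdiag m) c).2
      = (up (sdiag m) c').1 + (up (sdiag m) c').2) : c.1 + c.2 = c'.1 + c'.2 := by
  obtain ⟨i, j⟩ := c; obtain ⟨i', j'⟩ := c'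
  rw [mem_cells] at hc hc'
  have hs := sdiag_facts m
  unfold up at heq
  split_ifs at heq <;> simp only [] at heq ⊢ <;> omega


variable {k : ℕ} {P Q : Finset (ℕ × ℕ)}

lemma image_down_mem (hm : 1 ≤ m) (hP : P ∈ configs m k) (hav : ∀ c ∈ P, c.1 + c.2 ≠ sdiag m) :
    P.image (down (sdiag m)) ∈ configs (m - 1) k := by
  rw [mem_configs] at hP ⊢
  obtain ⟨hsub, hcard, hgood⟩ := hP
  have hinj : ∀ a ∈ P, ∀ b ∈ P, down (sdiag m) a = down (sdiag m) b → a = b := by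
    intro a ha b hb h
    rw [← up_down (hsub ha) (hav a ha), ← up_down (hsub hb) (hav b hb), h]
  refine ⟨?_, ?_, ?_⟩
  · intro c hc
    obtain ⟨a, ha, rfl⟩ := Finset.mem_image.1 hc
    exact down_mem hm (hsub ha) (hav a ha)
  · rw [Finset.card_image_of_injOn (fun a ha b hb => hinj a ha b hb), hcard]
  · refine good_of ?_ ?_
    · intro a' ha' b' hb' hsum
      obtain ⟨a, ha, rfl⟩ := Finset.mem_image.1 ha'
      obtain ⟨b, hb, rfl⟩ := Finset.mem_image.1 hb'
      have := down_sum_inj (hsub ha) (hsub hb) (hav a ha) (hav b hb) hsum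
      rw [hgood.sum_inj ha hb this]
    · intro a' ha' b' hb' hdiff
      obtain ⟨a, ha, rfl⟩ := Finset.mem_image.1 ha'
      obtain ⟨b, hb, rfl⟩ := Finset.mem_image.1 hb'
      rw [down_diff (hsub ha), down_diff (hsub hb)] at hdiff
      rw [hgood.diff_inj ha hb hdiff]

lemma image_up_mem (hm : 1 ≤ m) (hQ : Q ∈ configs (m - 1) k) :
    Q.image (up (sdiag m)) ∈ configs m k ∧
      ∀ c ∈ Q.image (up (sdiag m)), c.1 + c.2 ≠ sdiag m := by
  rw [mem_configs] at hQ
  obtain ⟨hsub, hcard, hgood⟩ := hQ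
  have hinj : ∀ a ∈ Q, ∀ b ∈ Q, up (sdiag m) a = up (sdiag m) b → a = b := by
    intro a ha b hb h
    rw [← down_up (hsub ha), ← down_up (hsub hb), h]
  refine ⟨mem_configs.2 ⟨?_, ?_, ?_⟩, ?_⟩
  · intro c hc
    obtain ⟨a, ha, rfl⟩ := Finset.mem_image.1 hc
    exact (up_mem hm (hsub ha)).1
  · rw [Finset.card_image_of_injOn (fun a ha b hb => hinj a ha b hb), hcard]
  · refine good_of ?_ ?_
    · intro a' ha' b' hb' hsum
      obtain ⟨a, ha, rfl⟩ := Finset.mem_image.1 ha'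
      obtain ⟨b, hb, rfl⟩ := Finset.mem_image.1 hb'
      have := up_sum_inj (hsub ha) (hsub hb) hsum
      rw [hgood.sum_inj ha hb this]
    · intro a' ha' b' hb' hdiff
      obtain ⟨a, ha, rfl⟩ := Finset.mem_image.1 ha'
      obtain ⟨b, hb, rfl⟩ := Finset.mem_image.1 hb'
      rw [up_diff a, up_diff b] at hdiff
      rw [hgood.diff_inj ha hb hdiff]
  · intro c hc
    obtain ⟨a, ha, rfl⟩ := Finset.mem_image.1 hc
    exact (up_mem hm (hsub ha)).2

lemma image_up_down (hsub : P ⊆ cells m) (hav : ∀ c ∈ P, c.1 + c.2 ≠ sdiag m) :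
    (P.image (down (sdiag m))).image (up (sdiag m)) = P := by
  rw [Finset.image_image]
  calc P.image (up (sdiag m) ∘ down (sdiag m)) = P.image id :=
        Finset.image_congr (fun x hx => up_down (hsub hx) (hav x hx))
    _ = P := Finset.image_id

lemma image_down_up (hsub : Q ⊆ cells (m - 1)) :
    (Q.image (up (sdiag m))).image (down (sdiag m)) = Q := by
  rw [Finset.image_image]
  calc Q.image (down (sdiag m) ∘ up (sdiag m)) = Q.image id :=
        Finset.image_congr (fun x hx => down_up (hsub hx))
    _ = Q := Finset.image_id

lemma card_avoid (hm : 1 ≤ m) :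
    ((configs m k).filter (fun P => ∀ c ∈ P, c.1 + c.2 ≠ sdiag m)).card
      = (configs (m - 1) k).card := by
  refine Finset.card_bij' (fun P _ => P.image (down (sdiag m)))
    (fun Q _ => Q.image (up (sdiag m))) ?_ ?_ ?_ ?_
  · intro P hP
    rw [Finset.mem_filter] at hP
    exact image_down_mem hm hP.1 hP.2
  · intro Q hQ
    rw [Finset.mem_filter]
    exact ⟨(image_up_mem hm hQ).1, (image_up_mem hm hQ).2⟩
  · intro P hP
    rw [Finset.mem_filter] at hP
    exact image_up_down (mem_configs.1 hP.1).1 hP.2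
  · intro Q hQ
    exact image_down_up (mem_configs.1 hQ).1


def exts (m : ℕ) (Q : Finset (ℕ × ℕ)) : Finset (ℕ × ℕ) :=
  (cells m).filter
    (fun c => c.1 + c.2 = sdiag m ∧ ∀ a ∈ Q, (c.1 : ℤ) - c.2 ≠ (a.1 : ℤ) - a.2)

lemma card_exts (hm : 1 ≤ m) (hQ : Q ∈ configs (m - 1) k) :
    (exts m Q).card = (sdiag m - 1) - k ∧ k ≤ sdiag m - 1 := by
  obtain ⟨hsub, hcard, hgood⟩ := mem_configs.1 hQ
  have hs := sdiag_facts m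
  have hdbound : ∀ a ∈ Q, 1 ≤ a.1 ∧ a.1 ≤ m - 1 ∧ 1 ≤ a.2 ∧ a.2 ≤ m - 1 ∧
      (a.1 + a.2) % 2 = 1 := fun a ha => mem_cells.1 (hsub ha)
  have himg : exts m Q = ((Finset.Icc 1 (sdiag m - 1)).filter
      (fun (i : ℕ) => ∀ a ∈ Q, 2 * (i : ℤ) - sdiag m ≠ (a.1 : ℤ) - a.2)).image
        (fun i => (i, sdiag m - i)) := by
    ext c
    obtain ⟨c1, c2⟩ := c
    simp only [exts, Finset.mem_filter, Finset.mem_image, mem_cells, Finset.mem_Icc]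
    constructor
    · rintro ⟨⟨h1, h2, h3, h4, h5⟩, h6, h7⟩
      refine ⟨c1, ⟨⟨by omega, by omega⟩, ?_⟩, ?_⟩
      · intro a ha
        have := h7 a ha
        omega
      · simp only [Prod.mk.injEq, true_and]
        omega
    · rintro ⟨i, ⟨⟨h1, h2⟩, h3⟩, hieq⟩
      rw [Prod.mk.injEq] at hieq
      obtain ⟨rfl, rfl⟩ := hieq
      refine ⟨⟨by omega, by omega, by omega, by omega, by omega⟩, by omega, ?_⟩
      intro a ha
      have := h3 a ha
      omega
  have hcard1 : (exts m Q).card = ((Finset.Icc 1 (sdiag m - 1)).filter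
      (fun (i : ℕ) => ∀ a ∈ Q, 2 * (i : ℤ) - sdiag m ≠ (a.1 : ℤ) - a.2)).card := by
    rw [himg]
    apply Finset.card_image_of_injOn
    intro a _ b _ hab
    exact congrArg Prod.fst hab
  have hbad : ((Finset.Icc 1 (sdiag m - 1)).filter
      (fun (i : ℕ) => ¬ ∀ a ∈ Q, 2 * (i : ℤ) - sdiag m ≠ (a.1 : ℤ) - a.2)).card
        = Q.card := by
    refine (Finset.card_bij (fun a _ => (sdiag m + a.1 - a.2) / 2) ?_ ?_ ?_).symm
    · intro a ha
      have hc := hdbound a ha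
      rw [Finset.mem_filter]
      refine ⟨Finset.mem_Icc.2 ⟨by omega, by omega⟩, ?_⟩
      push_neg
      exact ⟨a, ha, by omega⟩
    · intro a ha b hb hab
      have hca := hdbound a ha
      have hcb := hdbound b hb
      have : (a.1 : ℤ) - a.2 = (b.1 : ℤ) - b.2 := by omega
      exact hgood.diff_inj ha hb this
    · intro i hi
      rw [Finset.mem_filter] at hi
      obtain ⟨hi1, hi2⟩ := hi
      push_neg at hi2
      obtain ⟨a, ha, hae⟩ := hi2
      have hc := hdbound a ha
      refine ⟨a, ha, ?_⟩
      omega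
  have hsplit := Finset.card_filter_add_card_filter_not
    (s := Finset.Icc 1 (sdiag m - 1))
    (p := fun (i : ℕ) => ∀ a ∈ Q, 2 * (i : ℤ) - sdiag m ≠ (a.1 : ℤ) - a.2)
  rw [Nat.card_Icc, hbad, hcard] at hsplit
  exact ⟨by omega, by omega⟩


lemma card_hit (hm : 1 ≤ m) (hk : 1 ≤ k) :
    ((configs m k).filter (fun P => ¬ ∀ c ∈ P, c.1 + c.2 ≠ sdiag m)).card
      = ∑ Q ∈ configs (m - 1) (k - 1), (exts m Q).card := by
  rw [← Finset.card_sigma]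
  refine (Finset.card_bij (fun x _ => insert x.2 (x.1.image (up (sdiag m)))) ?_ ?_ ?_).symm
  · rintro ⟨Q, c⟩ hx
    rw [Finset.mem_sigma] at hx
    obtain ⟨hQ, hc⟩ := hx
    dsimp only at hQ hc
    simp only [exts, Finset.mem_filter] at hc
    have hccell := hc.1
    have hcsum := hc.2.1
    have hcdiff := hc.2.2
    obtain ⟨hsubQ, hcardQ, hgoodQ⟩ := mem_configs.1 hQ
    obtain ⟨hUmem, hUav⟩ := image_up_mem hm hQ
    obtain ⟨hsubU, hcardU, hgoodU⟩ := mem_configs.1 hUmem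
    have hcnotU : c ∉ Q.image (up (sdiag m)) := fun h => hUav c h hcsum
    have hdiffU : ∀ b ∈ Q.image (up (sdiag m)), (c.1 : ℤ) - c.2 ≠ (b.1 : ℤ) - b.2 := by
      intro b hb
      obtain ⟨a, ha, rfl⟩ := Finset.mem_image.1 hb
      rw [up_diff a]
      exact hcdiff a ha
    rw [Finset.mem_filter]
    constructor
    · rw [mem_configs]
      refine ⟨?_, ?_, ?_⟩
      · intro x hx
        rcases Finset.mem_insert.1 hx with rfl | hx
        · exact hccell
        · exact hsubU hx
      · rw [Finset.card_insert_of_notMem hcnotU, hcardU]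
        omega
      · refine good_of ?_ ?_
        · intro a ha b hb hsum
          rcases Finset.mem_insert.1 ha with rfl | ha' <;>
            rcases Finset.mem_insert.1 hb with rfl | hb'
          · rfl
          · exact absurd (by rw [← hsum]; exact hcsum) (hUav b hb')
          · exact absurd (hsum.trans hcsum) (hUav a ha')
          · exact hgoodU.sum_inj ha' hb' hsum
        · intro a ha b hb hdiff
          rcases Finset.mem_insert.1 ha with rfl | ha' <;>
            rcases Finset.mem_insert.1 hb with rfl | hb'
          · rfl
          · exact absurd hdiff (hdiffU b hb')
          · exact absurd hdiff.symm (hdiffU a ha')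
          · exact hgoodU.diff_inj ha' hb' hdiff
    · push_neg
      exact ⟨c, Finset.mem_insert_self _ _, hcsum⟩
  · rintro ⟨Q, c⟩ hx ⟨Q', c'⟩ hx' heq
    dsimp only at heq
    rw [Finset.mem_sigma] at hx hx'
    obtain ⟨hQ, hc⟩ := hx
    obtain ⟨hQ', hc'⟩ := hx'
    simp only [exts, Finset.mem_filter] at hc hc'
    have hsubQ := (mem_configs.1 hQ).1
    have hsubQ' := (mem_configs.1 hQ').1
    have hcs : c.1 + c.2 = sdiag m := hc.2.1
    have hcs' : c'.1 + c'.2 = sdiag m := hc'.2.1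
    have hUav := (image_up_mem hm hQ).2
    have hUav' := (image_up_mem hm hQ').2
    have hcc : c = c' := by
      have h1 : c' ∈ insert c (Q.image (up (sdiag m))) := by
        rw [heq]; exact Finset.mem_insert_self _ _
      rcases Finset.mem_insert.1 h1 with h | h
      · exact h.symm
      · exact absurd hcs' (hUav c' h)
    have hUU : Q.image (up (sdiag m)) = Q'.image (up (sdiag m)) := by
      ext x
      constructor
      · intro hxU
        have h1 : x ∈ insert c' (Q'.image (up (sdiag m))) := by
          rw [← heq]; exact Finset.mem_insert_of_mem hxU
        rcases Finset.mem_insert.1 h1 with rfl | h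
        · exact absurd hcs' (hUav x hxU)
        · exact h
      · intro hxU
        have h1 : x ∈ insert c (Q.image (up (sdiag m))) := by
          rw [heq]; exact Finset.mem_insert_of_mem hxU
        rcases Finset.mem_insert.1 h1 with rfl | h
        · exact absurd hcs (hUav' x hxU)
        · exact h
    have hQQ : Q = Q' := by
      have h2 := congrArg (fun S => S.image (down (sdiag m))) hUU
      simpa [image_down_up hsubQ, image_down_up hsubQ'] using h2
    subst hQQ
    subst hcc
    rfl
  · intro P hP
    rw [Finset.mem_filter] at hP
    obtain ⟨hPmem, hPhit⟩ := hP
    push_neg at hPhit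
    obtain ⟨c, hcP, hcs⟩ := hPhit
    obtain ⟨hsubP, hcardP, hgoodP⟩ := mem_configs.1 hPmem
    have hav : ∀ x ∈ P.erase c, x.1 + x.2 ≠ sdiag m := by
      intro x hx hxs
      exact (Finset.ne_of_mem_erase hx)
        (hgoodP.sum_inj (Finset.mem_of_mem_erase hx) hcP (hxs.trans hcs.symm))
    have hPe : P.erase c ∈ configs m (k - 1) := mem_configs.2
      ⟨(Finset.erase_subset _ _).trans hsubP,
        by rw [Finset.card_erase_of_mem hcP, hcardP],
        hgoodP.mono (Finset.erase_subset _ _)⟩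
    have hQ : (P.erase c).image (down (sdiag m)) ∈ configs (m - 1) (k - 1) :=
      image_down_mem hm hPe hav
    refine ⟨⟨(P.erase c).image (down (sdiag m)), c⟩, ?_, ?_⟩
    · rw [Finset.mem_sigma]
      refine ⟨hQ, ?_⟩
      simp only [exts, Finset.mem_filter]
      refine ⟨hsubP hcP, hcs, ?_⟩
      intro a ha
      obtain ⟨x, hx, rfl⟩ := Finset.mem_image.1 ha
      rw [down_diff (hsubP (Finset.mem_of_mem_erase hx))]
      intro hd
      exact (Finset.ne_of_mem_erase hx)
        (hgoodP.diff_inj (Finset.mem_of_mem_erase hx) hcP hd.symm)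
    · dsimp only
      rw [image_up_down ((Finset.erase_subset _ _).trans hsubP) hav,
        Finset.insert_erase hcP]


lemma main_nat {m k : ℕ} (hm : 1 ≤ m) (hk : 1 ≤ k) :
    (configs m k).card = (configs (m - 1) k).card
      + (configs (m - 1) (k - 1)).card * ((sdiag m - 1) - (k - 1)) := by
  have hsplit := Finset.card_filter_add_card_filter_not
    (s := configs m k) (p := fun P => ∀ c ∈ P, c.1 + c.2 ≠ sdiag m)
  rw [card_avoid hm, card_hit hm hk] at hsplit
  rw [← hsplit]
  congr 1
  rw [Finset.sum_congr rfl (fun Q hQ => (card_exts hm hQ).1), Finset.sum_const,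
    smul_eq_mul]

end

theorem blackCount_eq (m k : ℕ) : blackCount m k = (configs m k).card := rfl

end BlackAux

/-- Recurrence for nonattacking bishop placements on the black squares, with the
parity function `π(m) = 1` if `m` is odd and `0` otherwise. -/

theorem black_bishop_recurrence :
    (∀ m k : ℕ, 1 ≤ m → 1 ≤ k →
      (blackCount m k : ℤ) =
        blackCount (m - 1) k +
          ((m : ℤ) - k + 1 - (if Odd m then 1 else 0)) * blackCount (m - 1) (k - 1)) ∧
    (∀ m : ℕ, blackCount m 0 = 1) ∧
    (∀ k : ℕ, 1 ≤ k → blackCount 0 k = 0) := by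
  refine ⟨?_, ?_, ?_⟩
  · intro m k hm hk
    rw [BlackAux.blackCount_eq, BlackAux.blackCount_eq, BlackAux.blackCount_eq,
      BlackAux.main_nat hm hk]
    by_cases hz : (BlackAux.configs (m - 1) (k - 1)).card = 0
    · rw [hz]
      push_cast
      ring
    · obtain ⟨Q, hQ⟩ := Finset.card_pos.1 (Nat.pos_of_ne_zero hz)
      have hb := (BlackAux.card_exts hm hQ).2
      have hcast : (((BlackAux.sdiag m - 1) - (k - 1) : ℕ) : ℤ)
          = (m : ℤ) - k + 1 - (if Odd m then 1 else 0) := by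
        simp only [BlackAux.sdiag] at hb ⊢
        rcases Nat.even_or_odd m with he | ho
        · rw [if_neg (by simp [Nat.even_iff, Nat.odd_iff] at he ⊢; omega)]
          have hm2 : m % 2 = 0 := Nat.even_iff.1 he
          omega
        · rw [if_pos ho]
          have hm2 : m % 2 = 1 := Nat.odd_iff.1 ho
          omega
      rw [Nat.cast_add, Nat.cast_mul, hcast]
      ring
  · intro m
    rw [BlackAux.blackCount_eq]
    have hg : BlackAux.Good ∅ := fun a ha => absurd ha (Finset.notMem_empty a)
    simp [BlackAux.configs, Finset.powersetCard_zero, Finset.filter_singleton, hg]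
  · intro k hk
    rw [BlackAux.blackCount_eq, Finset.card_eq_zero]
    have hc : BlackAux.cells 0 = ∅ := by
      ext c
      simp only [BlackAux.mem_cells, Finset.notMem_empty, iff_false]
      omega
    ext P
    simp only [BlackAux.configs, Finset.mem_filter, Finset.mem_powersetCard, hc,
      Finset.subset_empty, Finset.notMem_empty, iff_false, not_and]
    rintro ⟨rfl, hcard⟩
    simp only [Finset.card_empty] at hcard
    omega
end

section
/- For all integers m ≥ 0 and k ≥ 0, R_K(m,k) = ∑_{j=0}^{k} C(⌊m/2⌋, j) · S(m−j, m−k). -/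
/-!
Rotated by 45°, a bishop placement is a rook placement in the coordinates `(i + j, i - j)`.
The black antidiagonal `i + j = d` becomes a row of cells with distinct odd differences
symmetric about `0`, and ordering the rows as `2m+1` (empty), `3`, `2m-1`, `5`, `2m-3`, …
makes the difference set of each row contain those of all earlier rows: a Ferrers board with
row lengths `0, 2, 2, 4, 4, …`. Adding a row of length `h` to such a board turns the rook
numbers into `r(k+1) + (h - k) r(k)`, because `k` rooks on the earlier rows block exactly `k`
cells of the new row. The closed form obeys the same recurrence, by Stirling's recurrence
`S(n+1, l) = l S(n, l) + S(n, l-1)` and, when `⌊m/2⌋` grows, Pascal's rule.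
-/

open Finset

namespace stirlingZ

theorem of_neg {n : ℕ} {l : ℤ} (hl : l < 0) : stirlingZ n l = 0 :=
  if_neg (not_le.2 hl)

theorem eq_zero_of_lt {n : ℕ} {l : ℤ} (h : (n : ℤ) < l) : stirlingZ n l = 0 := by
  rw [stirlingZ, if_pos (by omega), stirling2_eq_stirlingSecond]
  exact Nat.stirlingSecond_eq_zero_of_lt (by omega)

theorem self (n : ℕ) : stirlingZ n n = 1 := by
  rw [stirlingZ, if_pos (by omega), Int.toNat_natCast, stirling2_eq_stirlingSecond,
    Nat.stirlingSecond_self]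

theorem succ (n : ℕ) (l : ℤ) :
    (stirlingZ (n + 1) l : ℤ) = l * stirlingZ n l + stirlingZ n (l - 1) := by
  rcases lt_trichotomy l 0 with hl | rfl | hl
  · simp [of_neg hl, of_neg (by omega : l - 1 < 0)]
  · simp [stirlingZ, stirling2]
  · obtain ⟨l, rfl⟩ : ∃ l' : ℕ, l = l' + 1 := ⟨(l - 1).toNat, by omega⟩
    rw [stirlingZ, stirlingZ, stirlingZ, if_pos (by omega), if_pos (by omega), if_pos (by omega),
      add_sub_cancel_right, Int.toNat_natCast, show (l + 1 : ℤ).toNat = l + 1 by omega,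
      stirling2_eq_stirlingSecond, stirling2_eq_stirlingSecond, stirling2_eq_stirlingSecond,
      Nat.stirlingSecond_succ_succ]
    push_cast
    ring

end stirlingZ

def chooseStirlingSum (a m k : ℕ) : ℤ :=
  ∑ j ∈ range (k + 1), (a.choose j : ℤ) * stirlingZ (m - j) ((m : ℤ) - k)

namespace chooseStirlingSum

theorem zero_right (a m : ℕ) : chooseStirlingSum a m 0 = 1 := by
  simp [chooseStirlingSum, stirlingZ.self]

theorem eq_zero_of_lt {a m k : ℕ} (h : m < k) : chooseStirlingSum a m k = 0 :=
  sum_eq_zero fun j _ => by rw [stirlingZ.of_neg (by omega), Nat.cast_zero, mul_zero]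

theorem succ_succ {a m : ℕ} (h : a ≤ m) (k : ℕ) :
    chooseStirlingSum a (m + 1) (k + 1) =
      chooseStirlingSum a m (k + 1) + (m - k) * chooseStirlingSum a m k := by
  have term : ∀ j, (a.choose j : ℤ) * stirlingZ (m + 1 - j) ((m : ℤ) - k) =
      (m - k) * ((a.choose j : ℤ) * stirlingZ (m - j) ((m : ℤ) - k)) +
        (a.choose j : ℤ) * stirlingZ (m - j) ((m : ℤ) - (k + 1)) := by
    intro j
    rcases le_or_gt j a with hj | hj
    · rw [show m + 1 - j = m - j + 1 by omega, stirlingZ.succ, sub_sub]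
      ring
    · simp [Nat.choose_eq_zero_of_lt hj]
  have last : (a.choose (k + 1) : ℤ) * stirlingZ (m - (k + 1)) ((m : ℤ) - k) = 0 := by
    rcases le_or_gt (k + 1) a with hk | hk
    · rw [stirlingZ.eq_zero_of_lt (by omega), Nat.cast_zero, mul_zero]
    · rw [Nat.choose_eq_zero_of_lt hk, Nat.cast_zero, zero_mul]
  simp only [chooseStirlingSum, Nat.cast_add, Nat.cast_one, add_sub_add_right_eq_sub, term,
    sum_add_distrib, ← mul_sum, sum_range_succ _ (k + 1), last]
  ring

theorem succ_succ_succ (a m k : ℕ) :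
    chooseStirlingSum (a + 1) (m + 1) (k + 1) =
      chooseStirlingSum a (m + 1) (k + 1) + chooseStirlingSum a m k := by
  simp only [chooseStirlingSum, sum_range_succ' _ (k + 1), Nat.choose_succ_succ', Nat.cast_add,
    add_mul, sum_add_distrib, Nat.choose_zero_right, Nat.cast_one, Nat.add_sub_add_right,
    add_sub_add_right_eq_sub]
  ring

theorem half_succ_succ (m k : ℕ) :
    chooseStirlingSum ((m + 1) / 2) (m + 1) (k + 1) =
      chooseStirlingSum (m / 2) m (k + 1) +
        (2 * ((m + 1) / 2 : ℕ) - k) * chooseStirlingSum (m / 2) m k := by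
  obtain ⟨a, rfl | rfl⟩ := Nat.even_or_odd' m
  · rw [show (2 * a + 1) / 2 = a by omega, Nat.mul_div_cancel_left a two_pos,
      succ_succ (by omega)]
    push_cast
    ring
  · rw [show (2 * a + 1 + 1) / 2 = a + 1 by omega, show (2 * a + 1) / 2 = a by omega,
      succ_succ_succ, succ_succ (by omega)]
    push_cast
    ring

end chooseStirlingSum

section Placements

variable {α β γ : Type*} [DecidableEq β] [DecidableEq γ] {s : α → β} {t : α → γ}
  {X : Finset α} {d : β}

theorem card_filter_image_notMem_add_card (hinj : Set.InjOn t (X.filter (s · = d)))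
    (hcover : ∀ a ∈ X, ∃ c ∈ X, s c = d ∧ t c = t a) {Q : Finset α} (hQX : Q ⊆ X)
    (hQ : Set.InjOn t Q) :
    #((X.filter (s · = d)).filter fun c => t c ∉ Q.image t) + #Q = #(X.filter (s · = d)) := by
  set L := X.filter (s · = d)
  have hblocked : #(L.filter fun c => t c ∈ Q.image t) = #Q := calc
    _ = #((L.filter fun c => t c ∈ Q.image t).image t) :=
      (card_image_of_injOn (hinj.mono (filter_subset _ _))).symm
    _ = #(Q.image t) := by
      congr 1
      ext x
      simp only [mem_image, mem_filter, L]
      constructor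
      · rintro ⟨c, ⟨-, hc⟩, rfl⟩
        exact hc
      · rintro ⟨a, ha, rfl⟩
        obtain ⟨c, hcX, hcd, hca⟩ := hcover a (hQX ha)
        exact ⟨c, ⟨⟨hcX, hcd⟩, a, ha, hca.symm⟩, hca⟩
    _ = #Q := card_image_of_injOn hQ
  rw [← hblocked, add_comm, card_filter_add_card_filter_not]

variable [DecidableEq α]

def placements (s : α → β) (t : α → γ) (X : Finset α) (k : ℕ) : Finset (Finset α) :=
  (X.powersetCard k).filter fun P => ∀ a ∈ P, ∀ b ∈ P, a ≠ b → s a ≠ s b ∧ t a ≠ t b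

variable {k : ℕ}

theorem mem_placements {P : Finset α} :
    P ∈ placements s t X k ↔ (P ⊆ X ∧ #P = k) ∧ Set.InjOn s P ∧ Set.InjOn t P := by
  rw [placements, mem_filter, mem_powersetCard]
  refine and_congr_right fun _ => ⟨fun h => ⟨?_, ?_⟩, fun ⟨hs, ht⟩ a ha b hb hab => ?_⟩
  · exact fun a ha b hb hst => by_contra fun hab => (h a ha b hb hab).1 hst
  · exact fun a ha b hb hst => by_contra fun hab => (h a ha b hb hab).2 hst
  · exact ⟨fun hst => hab (hs ha hb hst), fun hst => hab (ht ha hb hst)⟩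

theorem card_placements_zero (s : α → β) (t : α → γ) (X : Finset α) :
    #(placements s t X 0) = 1 := by
  rw [placements, powersetCard_zero, filter_singleton, if_pos (by simp), card_singleton]

theorem placements_empty_succ (s : α → β) (t : α → γ) (k : ℕ) :
    placements s t ∅ (k + 1) = ∅ := by
  simp [placements]

theorem placements_filter (p : α → Prop) [DecidablePred p] :
    placements s t (X.filter p) k = (placements s t X k).filter fun P => ∀ a ∈ P, p a := by
  ext P
  simp only [mem_placements, mem_filter, subset_iff]
  grind

theorem insert_mem_placements {Q : Finset α} {c : α} (hQ : Q ∈ placements s t X k)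
    (hcX : c ∈ X) (hcs : s c ∉ Q.image s) (hct : t c ∉ Q.image t) :
    insert c Q ∈ placements s t X (k + 1) := by
  obtain ⟨⟨hQX, hQk⟩, hQs, hQt⟩ := mem_placements.1 hQ
  have hcQ : c ∉ Q := fun h => hcs (mem_image_of_mem s h)
  rw [mem_placements, coe_insert, Set.injOn_insert (mem_coe.not.2 hcQ),
    Set.injOn_insert (mem_coe.not.2 hcQ), ← coe_image, ← coe_image, mem_coe, mem_coe]
  exact ⟨⟨insert_subset hcX hQX, by rw [card_insert_of_notMem hcQ, hQk]⟩, ⟨hQs, hcs⟩, hQt, hct⟩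

theorem card_placements_meeting_line :
    #((placements s t X (k + 1)).filter fun P => ¬∀ a ∈ P, s a ≠ d) =
      ∑ Q ∈ placements s t (X.filter (s · ≠ d)) k,
        #((X.filter (s · = d)).filter fun c => t c ∉ Q.image t) := by
  rw [← card_sigma, placements_filter]
  symm
  refine card_bij (fun Qc _ => insert Qc.2 Qc.1) ?_ ?_ ?_
  · rintro ⟨Q, c⟩ hQc
    simp only [mem_sigma, mem_filter] at hQc
    obtain ⟨⟨hQ, hQd⟩, ⟨hcX, hcd⟩, hct⟩ := hQc
    have hcs : s c ∉ Q.image s := fun h => by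
      obtain ⟨b, hb, hbc⟩ := mem_image.1 h
      exact hQd b hb (hbc.trans hcd)
    exact mem_filter.2 ⟨insert_mem_placements hQ hcX hcs hct,
      fun h => h c (mem_insert_self c Q) hcd⟩
  · rintro ⟨Q₁, c₁⟩ h₁ ⟨Q₂, c₂⟩ h₂ heq
    simp only [mem_sigma, mem_filter] at h₁ h₂ heq
    have hc₁Q₁ : c₁ ∉ Q₁ := fun h => h₁.1.2 c₁ h h₁.2.1.2
    have hc₁Q₂ : c₁ ∉ Q₂ := fun h => h₂.1.2 c₁ h h₁.2.1.2
    obtain rfl : c₁ = c₂ := (mem_insert.1 (heq ▸ mem_insert_self c₁ Q₁)).resolve_right hc₁Q₂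
    rw [← erase_insert hc₁Q₁, heq, erase_insert hc₁Q₂]
  · intro P hP
    simp only [mem_filter, not_forall, not_not] at hP
    obtain ⟨hP, c, hcP, hcd⟩ := hP
    obtain ⟨⟨hPX, hPk⟩, hPs, hPt⟩ := mem_placements.1 hP
    have hoff : ∀ b ∈ P.erase c, s b ≠ d := fun b hb hbd =>
      (mem_erase.1 hb).1 (hPs (mem_erase.1 hb).2 hcP (hbd.trans hcd.symm))
    refine ⟨⟨P.erase c, c⟩, mem_sigma.2 ⟨mem_filter.2 ⟨mem_placements.2 ⟨⟨(erase_subset c P).trans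
      hPX, by rw [card_erase_of_mem hcP, hPk, Nat.add_sub_cancel]⟩, hPs.mono (erase_subset c P),
      hPt.mono (erase_subset c P)⟩, hoff⟩, ?_⟩, insert_erase hcP⟩
    refine mem_filter.2 ⟨mem_filter.2 ⟨hPX hcP, hcd⟩, fun hct => ?_⟩
    obtain ⟨b, hb, hbc⟩ := mem_image.1 hct
    exact (mem_erase.1 hb).1 (hPt (mem_erase.1 hb).2 hcP hbc)

theorem card_placements_succ_add (hinj : Set.InjOn t (X.filter (s · = d)))
    (hcover : ∀ a ∈ X, ∃ c ∈ X, s c = d ∧ t c = t a) (k : ℕ) :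
    #(placements s t X (k + 1)) + k * #(placements s t (X.filter (s · ≠ d)) k) =
      #(placements s t (X.filter (s · ≠ d)) (k + 1)) +
        #(X.filter (s · = d)) * #(placements s t (X.filter (s · ≠ d)) k) := by
  have hsplit := card_filter_add_card_filter_not (s := placements s t X (k + 1))
    (p := fun P => ∀ a ∈ P, s a ≠ d)
  rw [← placements_filter, card_placements_meeting_line] at hsplit
  have hfibers : ∑ Q ∈ placements s t (X.filter (s · ≠ d)) k,
      (#((X.filter (s · = d)).filter fun c => t c ∉ Q.image t) + k) =
        #(placements s t (X.filter (s · ≠ d)) k) * #(X.filter (s · = d)) := by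
    rw [sum_congr rfl fun Q hQ => ?_, sum_const, smul_eq_mul]
    obtain ⟨⟨hQX, rfl⟩, -, hQt⟩ := mem_placements.1 hQ
    exact card_filter_image_notMem_add_card hinj hcover (hQX.trans (filter_subset _ _)) hQt
  rw [sum_add_distrib, sum_const, smul_eq_mul] at hfibers
  linarith

end Placements

def diagonalOrder (m n : ℕ) : ℕ := if n % 2 = 1 then n + 2 else 2 * m + 1 - n

def prefixBoard (m n : ℕ) : Finset (ℕ × ℕ) :=
  (Icc 1 m ×ˢ Icc 1 m).filter fun a => ∃ j < n, a.1 + a.2 = diagonalOrder m j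

theorem diagonalOrder_inj {m i j : ℕ} (hi : i < m) (hj : j < m) :
    diagonalOrder m i = diagonalOrder m j ↔ i = j := by
  unfold diagonalOrder
  split_ifs <;> omega

theorem prefixBoard_zero (m : ℕ) : prefixBoard m 0 = ∅ := by
  simp [prefixBoard]

theorem prefixBoard_self (m : ℕ) :
    prefixBoard m m = (Icc 1 m ×ˢ Icc 1 m).filter fun a => Odd (a.1 + a.2) := by
  refine filter_congr fun a ha => ?_
  simp only [mem_product, mem_Icc] at ha
  rw [Nat.odd_iff]
  constructor
  · rintro ⟨j, -, hj⟩
    unfold diagonalOrder at hj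
    split_ifs at hj <;> omega
  · intro hodd
    by_cases hlow : a.1 + a.2 ≤ m + 1
    · exact ⟨a.1 + a.2 - 2, by omega, by simp only [diagonalOrder]; split_ifs <;> omega⟩
    · exact ⟨2 * m + 1 - (a.1 + a.2), by omega, by simp only [diagonalOrder]; split_ifs <;> omega⟩

theorem prefixBoard_filter_ne {m n : ℕ} (hn : n < m) :
    (prefixBoard m (n + 1)).filter (fun a => a.1 + a.2 ≠ diagonalOrder m n) =
      prefixBoard m n := by
  ext a
  simp only [prefixBoard, mem_filter]
  constructor
  · rintro ⟨⟨ha, j, hj, hjd⟩, hne⟩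
    exact ⟨ha, j, lt_of_le_of_ne (Nat.lt_succ_iff.1 hj) (by rintro rfl; exact hne hjd), hjd⟩
  · rintro ⟨ha, j, hj, hjd⟩
    exact ⟨⟨ha, j, hj.trans n.lt_succ_self, hjd⟩,
      hjd ▸ fun h => hj.ne ((diagonalOrder_inj (hj.trans hn) hn).1 h)⟩

theorem card_square_filter_add_eq (m d : ℕ) :
    #((Icc 1 m ×ˢ Icc 1 m).filter fun a => a.1 + a.2 = d) =
      min m (d - 1) + 1 - max 1 (d - m) := by
  rw [← Nat.card_Icc]
  refine card_nbij' Prod.fst (fun i => (i, d - i)) ?_ ?_ ?_ ?_ <;>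
    intro a ha <;> simp only [coe_filter, coe_Icc, mem_product, Set.mem_ofPred_eq,
      Set.mem_Icc, mem_Icc] at ha ⊢
  · omega
  · omega
  · ext <;> omega

theorem card_prefixBoard_filter_eq {m n : ℕ} (hn : n < m) :
    #((prefixBoard m (n + 1)).filter fun a => a.1 + a.2 = diagonalOrder m n) =
      2 * ((n + 1) / 2) := by
  have hdiag : (prefixBoard m (n + 1)).filter (fun a => a.1 + a.2 = diagonalOrder m n) =
      (Icc 1 m ×ˢ Icc 1 m).filter fun a => a.1 + a.2 = diagonalOrder m n := by
    ext a
    simp only [prefixBoard, mem_filter]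
    exact ⟨fun ⟨⟨ha, _⟩, hd⟩ => ⟨ha, hd⟩, fun ⟨ha, hd⟩ => ⟨⟨ha, n, n.lt_succ_self, hd⟩, hd⟩⟩
  rw [hdiag, card_square_filter_add_eq]
  unfold diagonalOrder
  split_ifs <;> omega

theorem exists_mem_prefixBoard_sub_eq {m n : ℕ} (hn : n < m) {a : ℕ × ℕ}
    (ha : a ∈ prefixBoard m (n + 1)) :
    ∃ c ∈ prefixBoard m (n + 1), c.1 + c.2 = diagonalOrder m n ∧
      (c.1 : ℤ) - c.2 = (a.1 : ℤ) - a.2 := by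
  simp only [prefixBoard, mem_filter, mem_product, mem_Icc] at ha ⊢
  obtain ⟨⟨⟨ha₁, ha₁'⟩, ha₂, ha₂'⟩, j, hj, hjd⟩ := ha
  refine ⟨((diagonalOrder m n + a.1 - a.2) / 2, (diagonalOrder m n + a.2 - a.1) / 2),
    ⟨⟨⟨?_, ?_⟩, ?_, ?_⟩, n, n.lt_succ_self, ?_⟩, ?_, ?_⟩ <;>
    unfold diagonalOrder at hjd ⊢ <;> split_ifs at hjd ⊢ <;> omega

theorem injOn_sub_filter_add_eq (X : Finset (ℕ × ℕ)) (d : ℕ) :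
    Set.InjOn (fun a : ℕ × ℕ => (a.1 : ℤ) - a.2) (X.filter fun a => a.1 + a.2 = d) := by
  intro a ha b hb hab
  simp only [coe_filter, Set.mem_ofPred_eq] at ha hb hab
  ext <;> omega

theorem card_placements_prefixBoard {m n : ℕ} (hn : n ≤ m) (k : ℕ) :
    (#(placements (fun a : ℕ × ℕ => a.1 + a.2) (fun a => (a.1 : ℤ) - a.2)
      (prefixBoard m n) k) : ℤ) = chooseStirlingSum (n / 2) n k := by
  induction n generalizing k with
  | zero =>
    rcases k with _ | k
    · rw [card_placements_zero, chooseStirlingSum.zero_right, Nat.cast_one]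
    · rw [prefixBoard_zero, placements_empty_succ, chooseStirlingSum.eq_zero_of_lt k.succ_pos,
        card_empty, Nat.cast_zero]
  | succ n ih =>
    rcases k with _ | k
    · rw [card_placements_zero, chooseStirlingSum.zero_right, Nat.cast_one]
    · have hstep := card_placements_succ_add (injOn_sub_filter_add_eq _ (diagonalOrder m n))
        (fun a ha => exists_mem_prefixBoard_sub_eq hn ha) k
      rw [prefixBoard_filter_ne hn, card_prefixBoard_filter_eq hn] at hstep
      rw [chooseStirlingSum.half_succ_succ, ← ih (by omega) k, ← ih (by omega) (k + 1)]
      zify at hstep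
      push_cast
      linear_combination hstep

/-- Closed form for nonattacking bishop placements on the black squares. -/
theorem black_bishop_closed_form (m k : ℕ) :
    blackCount m k =
      ∑ j ∈ Finset.range (k + 1),
        Nat.choose (m / 2) j * stirlingZ (m - j) ((m : ℤ) - k) := by
  have hboard : blackCount m k = #(placements (fun a : ℕ × ℕ => a.1 + a.2)
      (fun a => (a.1 : ℤ) - a.2) (prefixBoard m m) k) := by
    rw [prefixBoard_self]
    rfl
  rw [← Nat.cast_inj (R := ℤ), hboard, card_placements_prefixBoard le_rfl]
  push_cast
  rfl
end

section
/- For all integers m ≥ 0 and k ≥ 0, B_S(m,k) = ∑_{j=0}^{k} ∑_{i=0}^{j} C(⌊m/2⌋, i) · S(m−i, m−j) · ∑_{l=0}^{k−j} C(⌈m/2⌉, l) · S(m−l, m−k+j). -/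
open Finset

variable {α β γ : Type*} [DecidableEq α] [DecidableEq β] [DecidableEq γ]

open scoped Classical in
noncomputable def good (f : α → β) (g : α → γ) (k : ℕ) (C : Finset α) : Finset (Finset α) :=
  (C.powersetCard k).filter
    (fun (P : Finset α) => Set.InjOn f (P : Set α) ∧ Set.InjOn g (P : Set α))

noncomputable def mcount (f : α → β) (g : α → γ) (k : ℕ) (C : Finset α) : ℕ :=
  (good f g k C).card

open scoped Classical in
lemma mem_good {f : α → β} {g : α → γ} {k : ℕ} {C P : Finset α} :
    P ∈ good f g k C ↔ (P ⊆ C ∧ P.card = k) ∧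
      Set.InjOn f (P : Set α) ∧ Set.InjOn g (P : Set α) := by
  unfold good
  rw [Finset.mem_filter, Finset.mem_powersetCard]

lemma mcount_union_conv (f : α → β) (g : α → γ) {C₁ C₂ : Finset α}
    (hf : ∀ x ∈ C₁, ∀ y ∈ C₂, f x ≠ f y) (hg : ∀ x ∈ C₁, ∀ y ∈ C₂, g x ≠ g y) (k : ℕ) :
    mcount f g k (C₁ ∪ C₂) =
      ∑ j ∈ Finset.range (k+1), mcount f g j C₁ * mcount f g (k-j) C₂ := by
  have hdisj : Disjoint C₁ C₂ := by
    rw [Finset.disjoint_left]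
    intro x h1 h2
    exact hf x h1 x h2 rfl
  have key : mcount f g k (C₁ ∪ C₂) =
      ((Finset.range (k+1)).sigma
        (fun j => (good f g j C₁) ×ˢ (good f g (k-j) C₂))).card := by
    refine Finset.card_bij'
      (fun P _ => ⟨(P ∩ C₁).card, (P ∩ C₁, P ∩ C₂)⟩)
      (fun q _ => q.2.1 ∪ q.2.2) ?_ ?_ ?_ ?_
    · intro P hP
      rw [mem_good] at hP
      obtain ⟨⟨hsub, hcard⟩, hinjf, hinjg⟩ := hP
      have hpart : (P ∩ C₁) ∪ (P ∩ C₂) = P := by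
        rw [← Finset.inter_union_distrib_left]
        exact Finset.inter_eq_left.mpr hsub
      have hdisj2 : Disjoint (P ∩ C₁) (P ∩ C₂) :=
        hdisj.mono (Finset.inter_subset_right) (Finset.inter_subset_right)
      have hcards : (P ∩ C₁).card + (P ∩ C₂).card = k := by
        rw [← Finset.card_union_of_disjoint hdisj2, hpart, hcard]
      rw [Finset.mem_sigma, Finset.mem_range, Finset.mem_product]
      dsimp only
      refine ⟨by omega, ?_, ?_⟩
      · rw [mem_good]
        refine ⟨⟨Finset.inter_subset_right, rfl⟩, ?_, ?_⟩
        · exact hinjf.mono (by simp [Finset.coe_subset])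
        · exact hinjg.mono (by simp [Finset.coe_subset])
      · rw [mem_good]
        refine ⟨⟨Finset.inter_subset_right, by omega⟩, ?_, ?_⟩
        · exact hinjf.mono (by simp [Finset.coe_subset])
        · exact hinjg.mono (by simp [Finset.coe_subset])
    · rintro ⟨j, P₁, P₂⟩ hq
      dsimp only
      rw [Finset.mem_sigma, Finset.mem_range, Finset.mem_product] at hq
      dsimp only at hq
      obtain ⟨hj, h1, h2⟩ := hq
      rw [mem_good] at h1 h2
      obtain ⟨⟨hs1, hc1⟩, hf1, hg1⟩ := h1
      obtain ⟨⟨hs2, hc2⟩, hf2, hg2⟩ := h2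
      rw [mem_good]
      have hd12 : Disjoint P₁ P₂ := hdisj.mono hs1 hs2
      refine ⟨⟨Finset.union_subset_union hs1 hs2, ?_⟩, ?_, ?_⟩
      · rw [Finset.card_union_of_disjoint hd12, hc1, hc2]; omega
      · intro x hx y hy hxy
        simp only [Finset.coe_union, Set.mem_union, Finset.mem_coe] at hx hy
        rcases hx with hx | hx <;> rcases hy with hy | hy
        · exact hf1 (by exact_mod_cast hx) (by exact_mod_cast hy) hxy
        · exact absurd hxy (hf x (hs1 hx) y (hs2 hy))
        · exact absurd hxy.symm (hf y (hs1 hy) x (hs2 hx))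
        · exact hf2 (by exact_mod_cast hx) (by exact_mod_cast hy) hxy
      · intro x hx y hy hxy
        simp only [Finset.coe_union, Set.mem_union, Finset.mem_coe] at hx hy
        rcases hx with hx | hx <;> rcases hy with hy | hy
        · exact hg1 (by exact_mod_cast hx) (by exact_mod_cast hy) hxy
        · exact absurd hxy (hg x (hs1 hx) y (hs2 hy))
        · exact absurd hxy.symm (hg y (hs1 hy) x (hs2 hx))
        · exact hg2 (by exact_mod_cast hx) (by exact_mod_cast hy) hxy
    · intro P hP
      dsimp only
      rw [mem_good] at hP
      obtain ⟨⟨hsub, hcard⟩, -, -⟩ := hP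
      rw [← Finset.inter_union_distrib_left]
      exact Finset.inter_eq_left.mpr hsub
    · rintro ⟨j, P₁, P₂⟩ hq
      dsimp only
      rw [Finset.mem_sigma, Finset.mem_range, Finset.mem_product] at hq
      dsimp only at hq
      obtain ⟨hj, h1, h2⟩ := hq
      rw [mem_good] at h1 h2
      obtain ⟨⟨hs1, hc1⟩, -, -⟩ := h1
      obtain ⟨⟨hs2, hc2⟩, -, -⟩ := h2
      have e1 : (P₁ ∪ P₂) ∩ C₁ = P₁ := by
        rw [Finset.union_inter_distrib_right]
        rw [Finset.inter_eq_left.mpr hs1]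
        have : P₂ ∩ C₁ = ∅ := by
          rw [← Finset.disjoint_iff_inter_eq_empty]
          exact (hdisj.symm.mono hs2 le_rfl)
        rw [this, Finset.union_empty]
      have e2 : (P₁ ∪ P₂) ∩ C₂ = P₂ := by
        rw [Finset.union_inter_distrib_right]
        rw [Finset.inter_eq_left.mpr hs2]
        have : P₁ ∩ C₂ = ∅ := by
          rw [← Finset.disjoint_iff_inter_eq_empty]
          exact (hdisj.mono hs1 le_rfl)
        rw [this, Finset.empty_union]
      rw [e1, e2, hc1]
  rw [key, Finset.card_sigma]
  congr 1
  ext j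
  rw [Finset.card_product]
  rfl

lemma stirling2_succ_zero (n : ℕ) : stirling2 (n+1) 0 = 0 := rfl

section Mcount
variable {α β γ : Type*} [DecidableEq α] [DecidableEq β] [DecidableEq γ]

lemma mcount_zero (f : α → β) (g : α → γ) (C : Finset α) : mcount f g 0 C = 1 := by
  classical
  show (good f g 0 C).card = 1
  unfold good
  rw [Finset.powersetCard_zero, Finset.filter_singleton]
  simp

lemma mcount_eq_zero_of_lt (f : α → β) (g : α → γ) {k : ℕ} {C : Finset α}
    (h : (C.image g).card < k) : mcount f g k C = 0 := by
  classical
  show (good f g k C).card = 0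
  unfold good
  rw [Finset.card_eq_zero, Finset.filter_eq_empty_iff]
  rintro P hP ⟨-, hg⟩
  rw [Finset.mem_powersetCard] at hP
  have h1 : (P.image g).card = k := by
    rw [Finset.card_image_of_injOn hg, hP.2]
  have h2 : P.image g ⊆ C.image g := Finset.image_subset_image hP.1
  have := Finset.card_le_card h2
  omega

end Mcount
open scoped Classical in
lemma mcount_add_col (f : α → β) (g : α → γ) {C D : Finset α} {d₀ : γ}
    (hgD : ∀ x ∈ D, g x = d₀) (hfD : Set.InjOn f (D : Set α))
    (hC : ∀ x ∈ C, g x ≠ d₀)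
    (hcover : ∀ x ∈ C, ∃ y ∈ D, f y = f x) (k : ℕ) :
    mcount f g (k+1) (C ∪ D) = mcount f g (k+1) C + (D.card - k) * mcount f g k C := by
  have hCD : ∀ x ∈ C, x ∉ D := fun x hx hxD => hC x hx (hgD x hxD)
  have hsplit : good f g (k+1) (C ∪ D) =
      ((good f g (k+1) (C ∪ D)).filter (fun P => P ∩ D = ∅)) ∪
      ((good f g (k+1) (C ∪ D)).filter (fun P => ¬ (P ∩ D = ∅))) :=
    (Finset.filter_union_filter_not_eq _ _).symm
  have hdisj : Disjoint ((good f g (k+1) (C ∪ D)).filter (fun P => P ∩ D = ∅))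
      ((good f g (k+1) (C ∪ D)).filter (fun P => ¬ (P ∩ D = ∅))) :=
    Finset.disjoint_filter_filter_not _ _ _
  have e0 : (good f g (k+1) (C ∪ D)).filter (fun P => P ∩ D = ∅) = good f g (k+1) C := by
    ext P
    rw [Finset.mem_filter, mem_good, mem_good]
    constructor
    · rintro ⟨⟨⟨hsub, hcard⟩, hinj⟩, hPD⟩
      refine ⟨⟨?_, hcard⟩, hinj⟩
      intro x hx
      rcases Finset.mem_union.mp (hsub hx) with h | h
      · exact h
      · exact absurd (Finset.mem_inter.mpr ⟨hx, h⟩) (by rw [hPD]; exact Finset.notMem_empty x)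
    · rintro ⟨⟨hsub, hcard⟩, hinj⟩
      refine ⟨⟨⟨hsub.trans Finset.subset_union_left, hcard⟩, hinj⟩, ?_⟩
      rw [Finset.eq_empty_iff_forall_notMem]
      intro x hx
      rw [Finset.mem_inter] at hx
      exact hCD x (hsub hx.1) hx.2
  -- the part with a cell in D
  have e1 : ((good f g (k+1) (C ∪ D)).filter (fun P => ¬ (P ∩ D = ∅))).card =
      ((good f g k C).sigma (fun P => D.filter (fun y => f y ∉ P.image f))).card := by
    refine (Finset.card_bij (fun (q : Σ _ : Finset α, α) (_) => insert q.2 q.1) ?_ ?_ ?_).symm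
    · rintro ⟨P, y⟩ hq
      rw [Finset.mem_sigma, mem_good] at hq
      obtain ⟨⟨⟨hsub, hcard⟩, hinjf, hinjg⟩, hy⟩ := hq
      rw [Finset.mem_filter] at hy
      obtain ⟨hyD, hyf⟩ := hy
      have hyP : y ∉ P := fun h => hCD y (hsub h) hyD
      dsimp only
      rw [Finset.mem_filter, mem_good]
      refine ⟨⟨⟨?_, ?_⟩, ?_, ?_⟩, ?_⟩
      · intro x hx
        rcases Finset.mem_insert.mp hx with h | h
        · exact Finset.mem_union_right _ (h ▸ hyD)
        · exact Finset.mem_union_left _ (hsub h)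
      · rw [Finset.card_insert_of_notMem hyP, hcard]
      · -- InjOn f
        rw [Finset.coe_insert]
        intro a ha b hb hab
        have key : ∀ c, c ∈ (P : Set α) → f c ≠ f y := by
          intro c hc hcy
          exact hyf (hcy ▸ Finset.mem_image_of_mem f (by exact_mod_cast hc))
        rcases ha with rfl | ha <;> rcases hb with rfl | hb
        · rfl
        · exact absurd hab.symm (key b hb)
        · exact absurd hab (key a ha)
        · exact hinjf ha hb hab
      · -- InjOn g
        rw [Finset.coe_insert]
        intro a ha b hb hab
        rcases ha with rfl | ha <;> rcases hb with rfl | hb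
        · rfl
        · exact absurd hab.symm (fun h => hC b (hsub (by exact_mod_cast hb)) (h ▸ hgD a hyD))
        · exact absurd hab (fun h => hC a (hsub (by exact_mod_cast ha)) (h ▸ hgD b hyD))
        · exact hinjg ha hb hab
      · intro h
        exact Finset.notMem_empty y (h ▸ Finset.mem_inter.mpr ⟨Finset.mem_insert_self y P, hyD⟩)
    · -- injective
      rintro ⟨P, y⟩ hq ⟨Q, z⟩ hq' heq
      rw [Finset.mem_sigma, mem_good] at hq hq'
      obtain ⟨⟨⟨hsub, -⟩, -⟩, hy⟩ := hq
      obtain ⟨⟨⟨hsub', -⟩, -⟩, hz⟩ := hq'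
      rw [Finset.mem_filter] at hy hz
      dsimp only at heq
      have hyz : y = z := by
        have : y ∈ insert z Q := heq ▸ Finset.mem_insert_self y P
        rcases Finset.mem_insert.mp this with h | h
        · exact h
        · exact absurd hy.1 (hCD y (hsub' h))
      subst hyz
      have hyP : y ∉ P := fun h => hCD y (hsub h) hy.1
      have hyQ : y ∉ Q := fun h => hCD y (hsub' h) hy.1
      have : P = Q := by
        rw [← Finset.erase_insert hyP, ← Finset.erase_insert hyQ, heq]
      subst this
      rfl
    · -- surjective
      intro P' hP'
      rw [Finset.mem_filter, mem_good] at hP'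
      obtain ⟨⟨⟨hsub, hcard⟩, hinjf, hinjg⟩, hne⟩ := hP'
      obtain ⟨y, hy⟩ := Finset.nonempty_iff_ne_empty.mpr hne
      rw [Finset.mem_inter] at hy
      refine ⟨⟨P'.erase y, y⟩, ?_, ?_⟩
      · rw [Finset.mem_sigma, mem_good]
        have herase : P'.erase y ⊆ C := by
          intro x hx
          have hxP : x ∈ P' := Finset.mem_of_mem_erase hx
          rcases Finset.mem_union.mp (hsub hxP) with h | h
          · exact h
          · exfalso
            have : x = y := hinjg (by exact_mod_cast hxP) (by exact_mod_cast hy.1)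
              (by rw [hgD x h, hgD y hy.2])
            exact Finset.notMem_erase y P' (this ▸ hx)
        refine ⟨⟨⟨herase, ?_⟩, ?_, ?_⟩, ?_⟩
        · rw [Finset.card_erase_of_mem hy.1, hcard]
          omega
        · exact hinjf.mono (by simp [Finset.coe_subset, Finset.erase_subset])
        · exact hinjg.mono (by simp [Finset.coe_subset, Finset.erase_subset])
        · rw [Finset.mem_filter]
          refine ⟨hy.2, ?_⟩
          intro hcon
          rw [Finset.mem_image] at hcon
          obtain ⟨x, hx, hfx⟩ := hcon
          have hxy : x = y := hinjf (by exact_mod_cast Finset.mem_of_mem_erase hx)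
            (by exact_mod_cast hy.1) hfx
          exact (Finset.mem_erase.mp hx).1 hxy
      · dsimp only
        exact Finset.insert_erase hy.1
  have e2 : ∀ P ∈ good f g k C,
      (D.filter (fun y => f y ∉ P.image f)).card = D.card - k := by
    intro P hP
    rw [mem_good] at hP
    obtain ⟨⟨hsub, hcard⟩, hinjf, -⟩ := hP
    have himg : (D.filter (fun y => f y ∈ P.image f)).card = k := by
      have h1 : (D.filter (fun y => f y ∈ P.image f)).image f = P.image f := by
        apply Finset.Subset.antisymm
        · intro b hb
          rw [Finset.mem_image] at hb
          obtain ⟨y, hy, rfl⟩ := hb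
          exact (Finset.mem_filter.mp hy).2
        · intro b hb
          have hb' := hb
          rw [Finset.mem_image] at hb'
          obtain ⟨x, hx, rfl⟩ := hb'
          obtain ⟨y, hyD, hfy⟩ := hcover x (hsub hx)
          have : y ∈ D.filter (fun y => f y ∈ P.image f) :=
            Finset.mem_filter.mpr ⟨hyD, by rw [hfy]; exact hb⟩
          rw [← hfy]
          exact Finset.mem_image_of_mem f this
      have h2 : ((D.filter (fun y => f y ∈ P.image f)).image f).card
          = (D.filter (fun y => f y ∈ P.image f)).card :=
        Finset.card_image_of_injOn (hfD.mono (by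
          intro x hx
          simp only [Finset.coe_filter, Set.mem_setOf_eq] at hx
          exact hx.1))
      rw [← h2, h1, Finset.card_image_of_injOn hinjf, hcard]
    have h3 := Finset.card_filter_add_card_filter_not
      (s := D) (p := fun y => f y ∈ P.image f)
    omega
  have hfinal : mcount f g (k+1) (C ∪ D) =
      mcount f g (k+1) C +
      ((good f g k C).sigma (fun P => D.filter (fun y => f y ∉ P.image f))).card := by
    show (good f g (k+1) (C ∪ D)).card = _
    rw [hsplit, Finset.card_union_of_disjoint hdisj, e0, e1]
    rfl
  rw [hfinal, Finset.card_sigma]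
  congr 1
  rw [Finset.sum_congr rfl e2, Finset.sum_const, smul_eq_mul]
  rw [mcount]
  ring

/-- the cells of the board with difference `d` -/
def Dg (m : ℕ) (d : ℤ) : Finset (ℕ × ℕ) :=
  ((Finset.Icc 1 m ×ˢ Finset.Icc 1 m).filter (fun c => (c.1 : ℤ) - c.2 = d))

lemma mem_Dg {m : ℕ} {d : ℤ} {c : ℕ × ℕ} :
    c ∈ Dg m d ↔ (1 ≤ c.1 ∧ c.1 ≤ m ∧ 1 ≤ c.2 ∧ c.2 ≤ m) ∧ (c.1 : ℤ) - c.2 = d := by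
  unfold Dg
  rw [Finset.mem_filter, Finset.mem_product, Finset.mem_Icc, Finset.mem_Icc]
  tauto

lemma Dg_card (m : ℕ) (d : ℤ) : (Dg m d).card = m - d.natAbs := by
  classical
  have : Dg m d = (Finset.Icc 1 (m - d.natAbs)).image
      (fun j => if 0 ≤ d then (j + d.natAbs, j) else (j, j + d.natAbs)) := by
    ext c
    rw [mem_Dg, Finset.mem_image]
    constructor
    · rintro ⟨⟨h1, h2, h3, h4⟩, h5⟩
      by_cases hd : 0 ≤ d
      · refine ⟨c.2, ?_, ?_⟩
        · rw [Finset.mem_Icc]; omega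
        · rw [if_pos hd]
          have h6 : c.1 = c.2 + d.natAbs := by omega
          exact Prod.ext (by rw [h6]) rfl
      · refine ⟨c.1, ?_, ?_⟩
        · rw [Finset.mem_Icc]; omega
        · rw [if_neg hd]
          have h6 : c.2 = c.1 + d.natAbs := by omega
          exact Prod.ext rfl (by rw [h6])
    · rintro ⟨j, hj, rfl⟩
      rw [Finset.mem_Icc] at hj
      split_ifs with hd <;> dsimp only
      · refine ⟨⟨by omega, by omega, by omega, by omega⟩, ?_⟩
        have h7 : (d.natAbs : ℤ) = d := Int.natAbs_of_nonneg hd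
        rw [Nat.cast_add, h7]
        ring
      · refine ⟨⟨by omega, by omega, by omega, by omega⟩, ?_⟩
        have h7 : (d.natAbs : ℤ) = -d := by omega
        rw [Nat.cast_add, h7]
        ring
  rw [this, Finset.card_image_of_injOn, Nat.card_Icc]
  · omega
  · intro a _ b _ hab
    split_ifs at hab
    · exact congrArg Prod.snd hab
    · exact congrArg Prod.fst hab

lemma Dg_cover {m : ℕ} {d d' : ℤ} (habs : d.natAbs ≤ d'.natAbs) (hpar : (2:ℤ) ∣ (d' - d))
    {x : ℕ × ℕ} (hx : x ∈ Dg m d') :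
    ∃ y ∈ Dg m d, y.1 + y.2 = x.1 + x.2 := by
  obtain ⟨⟨h1, h2, h3, h4⟩, h5⟩ := mem_Dg.mp hx
  refine ⟨(((x.1 : ℤ) + x.2 + d).toNat / 2,
           x.1 + x.2 - ((x.1 : ℤ) + x.2 + d).toNat / 2), ?_, ?_⟩
  · rw [mem_Dg]
    refine ⟨⟨?_, ?_, ?_, ?_⟩, ?_⟩ <;> dsimp only <;> omega
  · dsimp only
    omega

lemma Dg_injOn_f (m : ℕ) (d : ℤ) :
    Set.InjOn (fun c : ℕ × ℕ => c.1 + c.2) (Dg m d : Set (ℕ × ℕ)) := by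
  intro a ha b hb hab
  rw [Finset.mem_coe, mem_Dg] at ha hb
  dsimp only at hab
  exact Prod.ext (by omega) (by omega)

/-- height of the `r`-th column to be added in parity class `π` -/
def hcol (m π r : ℕ) : ℕ := if (m - r) % 2 = π then r else r - 1

/-- difference value of the `r`-th column in parity class `π` -/
def dcol (m π r : ℕ) : ℤ := if (m - r) % 2 = π then -((m : ℤ) - r) else (m : ℤ) - r + 1

/-- union of the first `t` columns of parity class `π` -/
def Col (m π t : ℕ) : Finset (ℕ × ℕ) :=
  (Finset.Icc 1 t).biUnion (fun r => Dg m (dcol m π r))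

lemma hcol_le (m π r : ℕ) : r - 1 ≤ hcol m π r ∧ hcol m π r ≤ r := by
  unfold hcol; split_ifs <;> omega

lemma dcol_natAbs {m π r : ℕ} (hr : 1 ≤ r) (hrm : r ≤ m) :
    (dcol m π r).natAbs = m - hcol m π r := by
  unfold dcol hcol; split_ifs <;> omega

lemma Dg_dcol_card {m π r : ℕ} (hr : 1 ≤ r) (hrm : r ≤ m) :
    (Dg m (dcol m π r)).card = hcol m π r := by
  have h := hcol_le m π r
  rw [Dg_card, dcol_natAbs hr hrm]
  omega

lemma dcol_mod {m π r : ℕ} (hπ : π ≤ 1) (hr : 1 ≤ r) (hrm : r ≤ m) :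
    dcol m π r % 2 = π := by
  unfold dcol; split_ifs with h <;> omega

lemma dcol_inj {m π r r' : ℕ} (hr : 1 ≤ r) (hrm : r ≤ m) (hr' : 1 ≤ r') (hrm' : r' ≤ m)
    (h : dcol m π r = dcol m π r') : r = r' := by
  unfold dcol at h; split_ifs at h <;> omega

lemma Col_succ (m π t : ℕ) :
    Col m π (t+1) = Col m π t ∪ Dg m (dcol m π (t+1)) := by
  unfold Col
  rw [show Finset.Icc 1 (t+1) = insert (t+1) (Finset.Icc 1 t) by
        ext r; rw [Finset.mem_insert, Finset.mem_Icc, Finset.mem_Icc]; omega,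
      Finset.biUnion_insert, Finset.union_comm]

lemma Col_zero (m π : ℕ) : Col m π 0 = ∅ := by
  unfold Col
  rw [show Finset.Icc 1 0 = (∅ : Finset ℕ) by rfl, Finset.biUnion_empty]

lemma mem_Col {m π t : ℕ} {x : ℕ × ℕ} :
    x ∈ Col m π t ↔ ∃ r, (1 ≤ r ∧ r ≤ t) ∧ x ∈ Dg m (dcol m π r) := by
  unfold Col
  rw [Finset.mem_biUnion]
  constructor
  · rintro ⟨r, hr, hx⟩; exact ⟨r, by rw [Finset.mem_Icc] at hr; exact hr, hx⟩
  · rintro ⟨r, hr, hx⟩; exact ⟨r, by rw [Finset.mem_Icc]; exact hr, hx⟩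

/-- the parity class `π` of the board -/
def Cls (m π : ℕ) : Finset (ℕ × ℕ) :=
  (Finset.Icc 1 m ×ˢ Finset.Icc 1 m).filter (fun c => (c.1 + c.2) % 2 = π)

lemma mem_Cls {m π : ℕ} {x : ℕ × ℕ} :
    x ∈ Cls m π ↔ (1 ≤ x.1 ∧ x.1 ≤ m ∧ 1 ≤ x.2 ∧ x.2 ≤ m) ∧ (x.1 + x.2) % 2 = π := by
  unfold Cls
  rw [Finset.mem_filter, Finset.mem_product, Finset.mem_Icc, Finset.mem_Icc]
  tauto

lemma Cls_eq_Col {m π : ℕ} (hπ : π ≤ 1) : Cls m π = Col m π m := by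
  ext x
  rw [mem_Cls, mem_Col]
  constructor
  · rintro ⟨⟨h1, h2, h3, h4⟩, hpar⟩
    by_cases hd : x.2 ≥ x.1
    · refine ⟨m - (x.2 - x.1), ⟨by omega, by omega⟩, ?_⟩
      rw [mem_Dg]
      refine ⟨⟨h1, h2, h3, h4⟩, ?_⟩
      unfold dcol
      rw [if_pos (by omega : (m - (m - (x.2 - x.1))) % 2 = π)]
      push_cast
      omega
    · refine ⟨m + 1 - (x.1 - x.2), ⟨by omega, by omega⟩, ?_⟩
      rw [mem_Dg]
      refine ⟨⟨h1, h2, h3, h4⟩, ?_⟩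
      unfold dcol
      rw [if_neg (by omega : ¬ (m - (m + 1 - (x.1 - x.2))) % 2 = π)]
      push_cast
      omega
  · rintro ⟨r, ⟨hr1, hr2⟩, hx⟩
    obtain ⟨⟨h1, h2, h3, h4⟩, h5⟩ := mem_Dg.mp hx
    have hmod := dcol_mod (m := m) hπ hr1 hr2
    exact ⟨⟨h1, h2, h3, h4⟩, by omega⟩

lemma grid_eq_union (m : ℕ) :
    Finset.Icc 1 m ×ˢ Finset.Icc 1 m = Cls m 1 ∪ Cls m 0 := by
  ext x
  unfold Cls
  rw [Finset.mem_union, Finset.mem_filter, Finset.mem_filter]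
  constructor
  · intro hx
    rcases Nat.mod_two_eq_zero_or_one (x.1 + x.2) with h | h
    · exact Or.inr ⟨hx, h⟩
    · exact Or.inl ⟨hx, h⟩
  · rintro (⟨hx, -⟩ | ⟨hx, -⟩) <;> exact hx
lemma stirling2_eq_zero {n l : ℕ} (h : n < l) : stirling2 n l = 0 := by
  induction n generalizing l with
  | zero => cases l with
            | zero => omega
            | succ l => rfl
  | succ n ih =>
      cases l with
      | zero => omega
      | succ l => show (l+1) * stirling2 n (l+1) + stirling2 n l = 0
                  rw [ih (by omega), ih (by omega)]; ring

lemma stirling2_self (n : ℕ) : stirling2 n n = 1 := by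
  induction n with
  | zero => rfl
  | succ n ih =>
      show (n+1) * stirling2 n (n+1) + stirling2 n n = 1
      rw [stirling2_eq_zero (by omega), ih]; ring

lemma stirling2_succ (n l : ℕ) :
    stirling2 (n+1) (l+1) = (l + 1) * stirling2 n (l + 1) + stirling2 n l := rfl

lemma key_sum (b t j : ℕ) (hb : b ≤ t) (hj : j ≤ t) :
    ∑ i ∈ Finset.range (t+2), b.choose i * stirling2 (t+1-i) (t+1-j)
      = ∑ i ∈ Finset.range (t+1), b.choose i * stirling2 (t-i) (t-j)
        + (t+1-j) * ∑ i ∈ Finset.range (t+1), b.choose i * stirling2 (t-i) (t+1-j) := by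
  rw [Finset.sum_range_succ, Nat.choose_eq_zero_of_lt (by omega), zero_mul, add_zero]
  have step : ∀ i ∈ Finset.range (t+1),
      b.choose i * stirling2 (t+1-i) (t+1-j)
        = b.choose i * stirling2 (t-i) (t-j)
          + (t+1-j) * (b.choose i * stirling2 (t-i) (t+1-j)) := by
    intro i hi
    rw [Finset.mem_range] at hi
    have e1 : t+1-i = (t-i)+1 := by omega
    have e2 : t+1-j = (t-j)+1 := by omega
    rw [e1, e2, stirling2_succ]
    ring
  rw [Finset.sum_congr rfl step, Finset.sum_add_distrib, ← Finset.mul_sum]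

lemma key_sum' (b t j : ℕ) (hb : b ≤ t) (hj : j ≤ t) :
    ∑ i ∈ Finset.range (t+2), (b+1).choose i * stirling2 (t+1-i) (t+1-j)
      = ∑ i ∈ Finset.range (t+1), b.choose i * stirling2 (t-i) (t-j)
        + (t+2-j) * ∑ i ∈ Finset.range (t+1), b.choose i * stirling2 (t-i) (t+1-j) := by
  have split : ∑ i ∈ Finset.range (t+2), (b+1).choose i * stirling2 (t+1-i) (t+1-j)
      = ∑ i ∈ Finset.range (t+2), b.choose i * stirling2 (t+1-i) (t+1-j)
        + ∑ i ∈ Finset.range (t+1), b.choose i * stirling2 (t-i) (t+1-j) := by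
    rw [Finset.sum_range_succ' (fun i => (b+1).choose i * stirling2 (t+1-i) (t+1-j)) (t+1)]
    rw [Finset.sum_range_succ' (fun i => b.choose i * stirling2 (t+1-i) (t+1-j)) (t+1)]
    have e0 : (b+1).choose 0 * stirling2 (t+1-0) (t+1-j)
        = b.choose 0 * stirling2 (t+1-0) (t+1-j) := by
      rw [Nat.choose_zero_right, Nat.choose_zero_right]
    rw [e0]
    have term : ∀ i ∈ Finset.range (t+1),
        (b+1).choose (i+1) * stirling2 (t+1-(i+1)) (t+1-j)
          = b.choose (i+1) * stirling2 (t+1-(i+1)) (t+1-j)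
            + b.choose i * stirling2 (t-i) (t+1-j) := by
      intro i hi
      rw [Nat.choose_succ_succ]
      have e1 : t+1-(i+1) = t-i := by omega
      rw [e1]
      ring
    rw [Finset.sum_congr rfl term, Finset.sum_add_distrib]
    ring
  rw [split, key_sum b t j hb hj]
  have e2 : t+2-j = (t+1-j) + 1 := by omega
  rw [e2]
  ring

section MainWork

variable {α β γ : Type*} [DecidableEq α] [DecidableEq β] [DecidableEq γ]

/-- board sum coordinate -/
def fS : ℕ × ℕ → ℕ := fun c => c.1 + c.2
/-- board difference coordinate -/
def gS : ℕ × ℕ → ℤ := fun c => (c.1 : ℤ) - c.2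

/-- count of `r ≤ t` giving a "tall" column -/
def btcount (m π t : ℕ) : ℕ := ((Finset.Icc 1 t).filter (fun r => (m - r) % 2 = π)).card

lemma btcount_le (m π t : ℕ) : btcount m π t ≤ t := by
  unfold btcount
  calc ((Finset.Icc 1 t).filter (fun r => (m - r) % 2 = π)).card
      ≤ (Finset.Icc 1 t).card := Finset.card_filter_le _ _
    _ = t := by rw [Nat.card_Icc]; omega

lemma btcount_succ (m π t : ℕ) :
    btcount m π (t+1) = if (m - (t+1)) % 2 = π then btcount m π t + 1 else btcount m π t := by
  unfold btcount
  rw [show Finset.Icc 1 (t+1) = insert (t+1) (Finset.Icc 1 t) by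
        ext r; rw [Finset.mem_insert, Finset.mem_Icc, Finset.mem_Icc]; omega,
      Finset.filter_insert]
  split_ifs
  · rw [Finset.card_insert_of_notMem (fun h => by
      have := Finset.mem_of_mem_filter _ h
      rw [Finset.mem_Icc] at this
      omega)]
  · rfl

lemma hcol_succ (m π t : ℕ) :
    hcol m π (t+1) = if (m - (t+1)) % 2 = π then t+1 else t := by
  unfold hcol; split_ifs <;> omega

lemma sum_choose_stirling_top (b n : ℕ) :
    ∑ i ∈ Finset.range (n+1), b.choose i * stirling2 (n-i) n = 1 := by
  rw [Finset.sum_eq_single 0]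
  · rw [Nat.choose_zero_right, Nat.sub_zero, stirling2_self, one_mul]
  · intro i hi hne
    rw [Finset.mem_range] at hi
    rw [stirling2_eq_zero (by omega), mul_zero]
  · intro h
    exact absurd (Finset.mem_range.mpr (by omega)) h

lemma sum_choose_stirling_bot (b t : ℕ) :
    ∑ i ∈ Finset.range (t+1), b.choose i * stirling2 (t-i) 0 = b.choose t := by
  rw [Finset.sum_eq_single t]
  · rw [Nat.sub_self]
    show b.choose t * stirling2 0 0 = b.choose t
    rw [show stirling2 0 0 = 1 from rfl, mul_one]
  · intro i hi hne
    rw [Finset.mem_range] at hi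
    have : t - i = (t - i - 1) + 1 := by omega
    rw [this, stirling2_succ_zero, mul_zero]
  · intro h
    exact absurd (Finset.mem_range.mpr (by omega)) h

lemma col_vanish (m π t : ℕ) {j : ℕ} (hj : t < j) :
    mcount fS gS j (Col m π t) = 0 := by
  apply mcount_eq_zero_of_lt
  have hsub : (Col m π t).image gS ⊆ (Finset.Icc 1 t).image (fun r => dcol m π r) := by
    intro v hv
    rw [Finset.mem_image] at hv
    obtain ⟨x, hx, rfl⟩ := hv
    obtain ⟨r, hr, hxr⟩ := mem_Col.mp hx
    rw [Finset.mem_image]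
    refine ⟨r, Finset.mem_Icc.mpr hr, ?_⟩
    have := (mem_Dg.mp hxr).2
    unfold gS
    omega
  calc ((Col m π t).image gS).card
      ≤ ((Finset.Icc 1 t).image (fun r => dcol m π r)).card := Finset.card_le_card hsub
    _ ≤ (Finset.Icc 1 t).card := Finset.card_image_le
    _ = t := by rw [Nat.card_Icc]; omega
    _ < j := hj

lemma col_formula (m π : ℕ) (hπ : π ≤ 1) :
    ∀ t, t ≤ m → ∀ j, j ≤ t →
      mcount fS gS j (Col m π t)
        = ∑ i ∈ Finset.range (t+1), (btcount m π t).choose i * stirling2 (t-i) (t-j) := by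
  intro t
  induction t with
  | zero =>
      intro _ j hj
      interval_cases j
      rw [Col_zero, mcount_zero]
      show 1 = ∑ i ∈ Finset.range 1, (btcount m π 0).choose i * stirling2 (0-i) 0
      rw [Finset.sum_range_one, Nat.choose_zero_right]
      rfl
  | succ t ih =>
      intro htm j hj
      have htm' : t ≤ m := by omega
      -- the new column
      set D := Dg m (dcol m π (t+1)) with hD
      have hDcard : D.card = hcol m π (t+1) := Dg_dcol_card (by omega) htm
      have hgD : ∀ x ∈ D, gS x = dcol m π (t+1) := by
        intro x hx
        exact (mem_Dg.mp hx).2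
      have hfD : Set.InjOn fS (D : Set (ℕ × ℕ)) := Dg_injOn_f m _
      have hC : ∀ x ∈ Col m π t, gS x ≠ dcol m π (t+1) := by
        intro x hx hcon
        obtain ⟨r, hr, hxr⟩ := mem_Col.mp hx
        have hgx : gS x = dcol m π r := (mem_Dg.mp hxr).2
        have : r = t + 1 := dcol_inj hr.1 (by omega) (by omega) htm (by rw [← hgx, hcon])
        omega
      have hcover : ∀ x ∈ Col m π t, ∃ y ∈ D, fS y = fS x := by
        intro x hx
        obtain ⟨r, hr, hxr⟩ := mem_Col.mp hx
        have habs : (dcol m π (t+1)).natAbs ≤ (dcol m π r).natAbs := by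
          rw [dcol_natAbs (by omega) htm, dcol_natAbs hr.1 (by omega)]
          have h1 := hcol_le m π r
          have h2 := hcol_le m π (t+1)
          omega
        have hpar : (2:ℤ) ∣ (dcol m π r - dcol m π (t+1)) := by
          have m1 := dcol_mod (m := m) (r := r) hπ hr.1 (by omega)
          have m2 := dcol_mod (m := m) (r := t+1) hπ (by omega) htm
          omega
        obtain ⟨y, hy, hsum⟩ := Dg_cover habs hpar hxr
        exact ⟨y, hy, hsum⟩
      have hcolsucc : Col m π (t+1) = Col m π t ∪ D := Col_succ m π t
      -- case on j
      rcases Nat.eq_zero_or_pos j with rfl | hjpos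
      · rw [mcount_zero, Nat.sub_zero]
        exact (sum_choose_stirling_top _ _).symm
      obtain ⟨k, rfl⟩ : ∃ k, j = k + 1 := ⟨j - 1, by omega⟩
      have hrec := mcount_add_col fS gS hgD hfD hC hcover k
      rw [← hcolsucc] at hrec
      rw [hrec, hDcard, hcol_succ, btcount_succ]
      have hkt : k ≤ t := by omega
      rcases Nat.lt_or_ge k t with hkt' | hkt'
      · -- k + 1 ≤ t : both IH available
        rw [ih htm' (k+1) (by omega), ih htm' k hkt]
        split_ifs with hcond
        · rw [key_sum' (btcount m π t) t (k+1) (btcount_le m π t) (by omega)]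
          simp only [Nat.succ_sub_succ_eq_sub]
        · rw [key_sum (btcount m π t) t (k+1) (btcount_le m π t) (by omega)]
          simp only [Nat.succ_sub_succ_eq_sub]
      · -- k = t
        have hk : k = t := by omega
        subst hk
        rw [col_vanish m π k (by omega), ih htm' k le_rfl]
        have hbot : ∑ i ∈ Finset.range (k+1), (btcount m π k).choose i * stirling2 (k-i) (k-k)
            = (btcount m π k).choose k := by
          rw [Nat.sub_self]
          exact sum_choose_stirling_bot _ _
        rw [hbot]
        have htop : ∀ b : ℕ, ∑ i ∈ Finset.range (k+2), b.choose i * stirling2 (k+1-i) (k+1-(k+1))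
            = b.choose (k+1) := by
          intro b
          rw [Nat.sub_self]
          exact sum_choose_stirling_bot b (k+1)
        rw [htop (if (m-(k+1))%2 = π then btcount m π k + 1 else btcount m π k)]
        have hble := btcount_le m π k
        split_ifs with hcond
        · rw [Nat.choose_succ_succ,
            Nat.choose_eq_zero_of_lt (show btcount m π k < k+1 by omega)]
          have h9 : k + 1 - k = 1 := by omega
          rw [h9]
          ring
        · rw [Nat.choose_eq_zero_of_lt (show btcount m π k < k+1 by omega)]
          have h9 : k - k = 0 := by omega
          rw [h9]
          ring

end MainWork

lemma count_mod (n π : ℕ) (hπ : π ≤ 1) :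
    ((Finset.range n).filter (fun s => s % 2 = π)).card = (n + 1 - π) / 2 := by
  induction n with
  | zero => simp; omega
  | succ n ih =>
      rw [Finset.range_add_one, Finset.filter_insert]
      split_ifs with h
      · rw [Finset.card_insert_of_notMem (fun hc => by
          have := Finset.mem_of_mem_filter _ hc
          rw [Finset.mem_range] at this
          omega), ih]
        omega
      · rw [ih]
        omega

lemma btcount_eq (m π : ℕ) (hπ : π ≤ 1) : btcount m π m = (m + 1 - π) / 2 := by
  rw [← count_mod m π hπ]
  unfold btcount
  apply Finset.card_bij' (fun r _ => m - r) (fun s _ => m - s)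
  · intro r hr
    rw [Finset.mem_filter, Finset.mem_Icc] at hr
    rw [Finset.mem_filter, Finset.mem_range]
    omega
  · intro s hs
    rw [Finset.mem_filter, Finset.mem_range] at hs
    rw [Finset.mem_filter, Finset.mem_Icc]
    constructor
    · omega
    · have : m - (m - s) = s := by omega
      rw [this]
      exact hs.2
  · intro r hr
    rw [Finset.mem_filter, Finset.mem_Icc] at hr
    omega
  · intro s hs
    rw [Finset.mem_filter, Finset.mem_range] at hs
    omega

lemma cls_count {m : ℕ} (π : ℕ) (hπ : π ≤ 1) (j : ℕ) :
    mcount fS gS j (Cls m π) =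
      ∑ i ∈ Finset.range (j+1),
        (btcount m π m).choose i * stirlingZ (m-i) ((m:ℤ) - j) := by
  rw [Cls_eq_Col hπ]
  by_cases hj : j ≤ m
  · rw [col_formula m π hπ m le_rfl j hj]
    have hz : ∀ i, stirlingZ (m-i) ((m:ℤ) - j) = stirling2 (m-i) (m-j) := by
      intro i
      unfold stirlingZ
      rw [if_pos (by omega : (0:ℤ) ≤ (m:ℤ) - j)]
      congr 1
      omega
    rw [show (∑ i ∈ Finset.range (j+1),
          (btcount m π m).choose i * stirlingZ (m-i) ((m:ℤ) - j))
        = ∑ i ∈ Finset.range (j+1), (btcount m π m).choose i * stirling2 (m-i) (m-j) from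
      Finset.sum_congr rfl (fun i _ => by rw [hz i])]
    symm
    apply Finset.sum_subset
    · exact Finset.range_subset_range.mpr (by omega)
    · intro i hi hni
      rw [Finset.mem_range] at hi hni
      rw [stirling2_eq_zero (by omega), mul_zero]
  · rw [col_vanish m π m (by omega)]
    symm
    apply Finset.sum_eq_zero
    intro i _
    unfold stirlingZ
    rw [if_neg (by omega : ¬ (0:ℤ) ≤ (m:ℤ) - j), mul_zero]

lemma bishop_eq_mcount (m k : ℕ) :
    bishopCount m k = mcount fS gS k (Finset.Icc 1 m ×ˢ Finset.Icc 1 m) := by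
  classical
  unfold bishopCount mcount good
  congr 1
  apply Finset.filter_congr
  intro P _
  constructor
  · intro h
    constructor
    · intro a ha b hb hab
      by_contra hne
      exact (h a (by exact_mod_cast ha) b (by exact_mod_cast hb) hne).1 hab
    · intro a ha b hb hab
      by_contra hne
      exact (h a (by exact_mod_cast ha) b (by exact_mod_cast hb) hne).2 hab
  · rintro ⟨h1, h2⟩ a ha b hb hne
    constructor
    · intro he
      exact hne (h1 (by exact_mod_cast ha) (by exact_mod_cast hb) he)
    · intro he
      exact hne (h2 (by exact_mod_cast ha) (by exact_mod_cast hb) he)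

/-- Simplified closed form for nonattacking bishops on the square board. -/
theorem bishop_closed_form (m k : ℕ) :
    bishopCount m k =
      ∑ j ∈ Finset.range (k + 1), ∑ i ∈ Finset.range (j + 1),
        Nat.choose (m / 2) i * stirlingZ (m - i) ((m : ℤ) - j) *
          ∑ l ∈ Finset.range (k - j + 1),
            Nat.choose ((m + 1) / 2) l * stirlingZ (m - l) ((m : ℤ) - k + j) := by
  rw [bishop_eq_mcount, grid_eq_union m]
  rw [mcount_union_conv fS gS ?_ ?_ k]
  · apply Finset.sum_congr rfl
    intro j hj
    rw [Finset.mem_range] at hj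
    rw [cls_count 1 (by omega) j, cls_count 0 (by omega) (k - j)]
    rw [btcount_eq m 1 (by omega), btcount_eq m 0 (by omega)]
    rw [show (m + 1 - 1) / 2 = m / 2 by omega, show m + 1 - 0 = m + 1 by omega]
    rw [Finset.sum_mul]
    apply Finset.sum_congr rfl
    intro i _
    rw [show ((m:ℤ) - ↑(k - j)) = (m:ℤ) - k + j by omega]
  · intro x hx y hy
    rw [mem_Cls] at hx hy
    unfold fS
    omega
  · intro x hx y hy
    rw [mem_Cls] at hx hy
    unfold gS
    omega
end
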